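/- arXiv:2103.11872 — 8 statements merged into one kernel-verified Lean document; each statement's English description precedes it below -/
import Mathlib

section
/- Let β_{ζ,η} be a beta distributed random variable with parameters ζ, η > 0. Then for every integer k ≥ 1, E[(log β_{ζ,η})^k] = Σ_{π ∈ P_k} Π_{Γ ∈ π} q_{#Γ}(ζ,η), where P_k is the set of partitions of {1,...,k}, #Γ is the size of block Γ, and q_j(ζ,η) := ψ_{j-1}(ζ) - ψ_{j-1}(ζ+η). -/
open MeasureTheory
open scoped Classical

/-- The beta distribution with parameters `a, b`, as a measure on `ℝ`. -/
noncomputable def betaMeasure (a b : ℝ) : Measure ℝ :=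
  volume.withDensity fun x =>
    ENNReal.ofReal (if x ∈ Set.Ioo (0:ℝ) 1 then
      Real.Gamma (a + b) / (Real.Gamma a * Real.Gamma b) * x ^ (a - 1) * (1 - x) ^ (b - 1)
    else 0)

/-- The `k`-th polygamma function. -/
noncomputable def polygamma (k : ℕ) (x : ℝ) : ℝ :=
  iteratedDeriv (k + 1) (fun y => Real.log (Real.Gamma y)) x

/-- `P` is a set partition of `Fin k` (viewed as a finset of nonempty disjoint blocks
covering everything). -/
def IsSetPartition (k : ℕ) (P : Finset (Finset (Fin k))) : Prop :=
  (∀ B ∈ P, B.Nonempty) ∧ ∀ a : Fin k, ∃! B, B ∈ P ∧ a ∈ B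

/-!
Write `L a = log Γ a + log Γ η - log Γ (a + η)`, so that `B(a, η) = exp (L a)` and
`L⁽ʲ⁾ a = ψ_{j-1}(a) - ψ_{j-1}(a + η)` for `j ≥ 1`. Differentiating under the integral sign,
`∫₀¹ x^(a-1) (1-x)^(η-1) (log x)^k dx` is the `k`-th derivative of `a ↦ B(a, η)`, and the
`k`-th derivative of `exp ∘ L` is `exp ∘ L` times the sum over set partitions of `{1, …, k}` of the
products of `L⁽#Γ⁾` over the blocks `Γ`. The latter follows by induction on the ground set: a
partition of `insert a s` is a partition of `s` with `a` either added as a singleton block or put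
into one of its blocks, matching the two terms of the product rule for `(exp ∘ L) · Σ_π ∏ L⁽#Γ⁾`.
Dividing by `B(ζ, η)`, the normalising constant of the beta density, gives the moments.
-/

namespace Finpartition

open Finset

variable {α : Type*} [DecidableEq α] {s : Finset α} {a : α}

/-- Adds `a` to the part `C` of `P`, or as a new singleton part when `C = ∅`. Intersecting `C`
with `s` only serves to make this total. -/
def insertInto (P : Finpartition s) (ha : a ∉ s) (C : Finset α) : Finpartition (insert a s) :=
  (P.avoid C).extend (b := insert a (s ∩ C)) (insert_ne_empty _ _)
    (disjoint_left.2 fun x hx hx' => by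
      rw [mem_sdiff] at hx
      rcases mem_insert.1 hx' with rfl | hx'
      exacts [ha hx.1, hx.2 (mem_inter.1 hx').2])
    (by rw [sup_eq_union, union_insert, sdiff_union_inter])

def eraseElem (P : Finpartition (insert a s)) (ha : a ∉ s) : Finpartition s :=
  (P.avoid {a}).copy (by rw [sdiff_singleton_eq_erase, erase_insert ha])

lemma parts_avoid_of_mem_insert_empty (P : Finpartition s) {C : Finset α}
    (hC : C ∈ insert ∅ P.parts) : (P.avoid C).parts = P.parts.erase C := by
  ext B
  rw [mem_avoid, mem_erase]
  rcases mem_insert.1 hC with rfl | hC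
  · simp only [subset_empty, sdiff_empty]
    exact ⟨by rintro ⟨d, hd, hne, rfl⟩; exact ⟨hne, hd⟩, fun ⟨hne, hB⟩ => ⟨B, hB, hne, rfl⟩⟩
  · constructor
    · rintro ⟨d, hd, hdC, rfl⟩
      have hne : d ≠ C := by rintro rfl; exact hdC le_rfl
      have hdisj : Disjoint d C := P.disjoint hd hC hne
      rw [sdiff_eq_self_of_disjoint hdisj]
      exact ⟨hne, hd⟩
    · rintro ⟨hne, hB⟩
      have hdisj : Disjoint B C := P.disjoint hB hC hne
      exact ⟨B, hB, fun h => P.ne_bot hB (hdisj.eq_bot_of_le h), sdiff_eq_self_of_disjoint hdisj⟩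

lemma subset_of_mem_insert_empty (P : Finpartition s) {C : Finset α}
    (hC : C ∈ insert ∅ P.parts) : C ⊆ s := by
  rcases mem_insert.1 hC with rfl | hC
  exacts [empty_subset s, P.subset hC]

lemma parts_insertInto (P : Finpartition s) (ha : a ∉ s) {C : Finset α}
    (hC : C ∈ insert ∅ P.parts) :
    (P.insertInto ha C).parts = insert (insert a C) (P.parts.erase C) := by
  rw [insertInto, extend_parts, parts_avoid_of_mem_insert_empty P hC,
    inter_eq_right.2 (P.subset_of_mem_insert_empty hC)]

lemma part_insertInto (P : Finpartition s) (ha : a ∉ s) {C : Finset α}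
    (hC : C ∈ insert ∅ P.parts) : (P.insertInto ha C).part a = insert a C :=
  part_eq_of_mem _ (by rw [parts_insertInto P ha hC]; exact mem_insert_self _ _)
    (mem_insert_self a C)

lemma parts_eraseElem (P : Finpartition (insert a s)) (ha : a ∉ s) :
    (P.eraseElem ha).parts = (P.parts.image (·.erase a)).erase ∅ := by
  simp [eraseElem, avoid, sdiff_singleton_eq_erase]

lemma eraseElem_insertInto (P : Finpartition s) (ha : a ∉ s) {C : Finset α}
    (hC : C ∈ insert ∅ P.parts) : (P.insertInto ha C).eraseElem ha = P := by
  have hCs := P.subset_of_mem_insert_empty hC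
  ext1
  rw [parts_eraseElem, parts_insertInto P ha hC, image_insert,
    erase_insert fun h => ha (hCs h), image_congr (g := id), image_id]
  · rcases mem_insert.1 hC with rfl | hC
    · rw [erase_insert (notMem_erase _ _), erase_eq_of_notMem P.empty_notMem_parts]
    · rw [insert_erase hC, erase_eq_of_notMem P.empty_notMem_parts]
  · intro B hB
    exact erase_eq_of_notMem fun h => ha (P.subset (mem_of_mem_erase hB) h)

lemma erase_part_mem_eraseElem (P : Finpartition (insert a s)) (ha : a ∉ s) :
    (P.part a).erase a ∈ insert ∅ (P.eraseElem ha).parts := by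
  rw [parts_eraseElem, mem_insert, mem_erase, mem_image]
  by_cases h : (P.part a).erase a = ∅
  · exact Or.inl h
  · exact Or.inr ⟨h, P.part a, P.part_mem.2 (mem_insert_self a s), rfl⟩

lemma insertInto_eraseElem (P : Finpartition (insert a s)) (ha : a ∉ s) :
    (P.eraseElem ha).insertInto ha ((P.part a).erase a) = P := by
  have haP : a ∈ P.part a := P.mem_part_self.2 (mem_insert_self a s)
  have hpart : P.part a ∈ P.parts := P.part_mem.2 (mem_insert_self a s)
  ext1
  rw [parts_insertInto _ ha (P.erase_part_mem_eraseElem ha), insert_erase haP]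
  conv_rhs => rw [← insert_erase hpart]
  congr 1
  ext B
  simp only [parts_eraseElem, mem_erase, mem_image]
  constructor
  · rintro ⟨hBC, hB0, d, hd, rfl⟩
    have hda : a ∉ d := fun h => hBC (by rw [P.part_eq_of_mem hd h])
    rw [erase_eq_of_notMem hda]
    exact ⟨fun h => hda (h ▸ haP), hd⟩
  · rintro ⟨hBa, hB⟩
    have hBa' : a ∉ B := fun h => hBa (P.part_eq_of_mem hB h).symm
    refine ⟨fun h => ?_, P.ne_empty hB, B, hB, erase_eq_of_notMem hBa'⟩
    have hdisj : Disjoint B (P.part a) := P.disjoint hB hpart hBa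
    exact P.ne_empty hB (hdisj.eq_bot_of_le (h ▸ erase_subset a _))

/-- A partition of `insert a s` is determined by the partition of `s` obtained by removing `a`
together with the part that `a` was added to (`∅` if `{a}` is a part). -/
lemma sum_eq_sum_sum_insertInto {M : Type*} [AddCommMonoid M] (ha : a ∉ s)
    (g : Finpartition (insert a s) → M) :
    ∑ P, g P = ∑ P : Finpartition s, ∑ C ∈ insert ∅ P.parts, g (P.insertInto ha C) := by
  rw [sum_sigma']
  refine sum_nbij' (fun P => ⟨P.eraseElem ha, (P.part a).erase a⟩) (fun p => p.1.insertInto ha p.2)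
    (fun P _ => mem_sigma.2 ⟨mem_univ _, P.erase_part_mem_eraseElem ha⟩) (fun _ _ => mem_univ _)
    (fun P _ => P.insertInto_eraseElem ha) ?_ (fun P _ => by rw [P.insertInto_eraseElem ha])
  rintro ⟨P, C⟩ hC
  rw [mem_sigma] at hC
  rw [eraseElem_insertInto P ha hC.2, part_insertInto P ha hC.2,
    erase_insert fun h => ha (P.subset_of_mem_insert_empty hC.2 h)]

theorem sum_prod_parts_insert {R : Type*} [CommSemiring R] (ha : a ∉ s) (f : Finset α → R) :
    ∑ P : Finpartition (insert a s), ∏ B ∈ P.parts, f B =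
      ∑ P : Finpartition s, (f {a} * ∏ B ∈ P.parts, f B +
        ∑ C ∈ P.parts, f (insert a C) * ∏ B ∈ P.parts.erase C, f B) := by
  have hprod (P : Finpartition s) {C : Finset α} (hC : C ∈ insert ∅ P.parts) :
      ∏ B ∈ (P.insertInto ha C).parts, f B = f (insert a C) * ∏ B ∈ P.parts.erase C, f B := by
    rw [parts_insertInto P ha hC, prod_insert]
    exact fun h => ha (P.subset (mem_of_mem_erase h) (mem_insert_self a C))
  rw [sum_eq_sum_sum_insertInto ha]
  refine sum_congr rfl fun P _ => ?_
  rw [sum_insert P.empty_notMem_parts, hprod P (mem_insert_self _ _),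
    LawfulSingleton.insert_empty_eq, erase_eq_of_notMem P.empty_notMem_parts]
  exact congrArg _ (sum_congr rfl fun C hC => hprod P (mem_insert_of_mem hC))

end Finpartition

open Set Filter Topology
open scoped ContDiff

section IteratedDeriv

variable {𝕜 F : Type*} [NontriviallyNormedField 𝕜] [NormedAddCommGroup F] [NormedSpace 𝕜 F]
  {U : Set 𝕜}

lemma iteratedDeriv_eq_of_hasDerivAt_succ {f : ℕ → 𝕜 → F} (hU : IsOpen U)
    (hf : ∀ n, ∀ x ∈ U, HasDerivAt (f n) (f (n + 1) x) x) (n : ℕ) {x : 𝕜} (hx : x ∈ U) :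
    iteratedDeriv n (f 0) x = f n x := by
  induction n generalizing x with
  | zero => rw [iteratedDeriv_zero]
  | succ n ih =>
    have heq : iteratedDeriv n (f 0) =ᶠ[𝓝 x] f n := eventually_of_mem (hU.mem_nhds hx) @ih
    rw [iteratedDeriv_succ, heq.deriv_eq, (hf n x hx).deriv]

lemma ContDiffOn.hasDerivAt_iteratedDeriv {n : ℕ} {f : 𝕜 → F} (hf : ContDiffOn 𝕜 (n + 1) f U)
    (hU : IsOpen U) {x : 𝕜} (hx : x ∈ U) :
    HasDerivAt (iteratedDeriv n f) (iteratedDeriv (n + 1) f x) x := by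
  have heq : iteratedDerivWithin n f U =ᶠ[𝓝 x] iteratedDeriv n f :=
    eventually_of_mem (hU.mem_nhds hx) (iteratedDerivWithin_of_isOpen hU)
  have hdiff := (hf.differentiableOn_iteratedDerivWithin (mod_cast n.lt_succ_self)
    hU.uniqueDiffOn x hx).differentiableAt (hU.mem_nhds hx)
  rw [iteratedDeriv_succ]
  exact (hdiff.congr_of_eventuallyEq heq.symm).hasDerivAt

end IteratedDeriv

open Real Finset in
theorem iteratedDeriv_exp_comp {f : ℝ → ℝ} {U : Set ℝ} (hU : IsOpen U)
    (hf : ContDiffOn ℝ ∞ f U) {α : Type*} [DecidableEq α] (s : Finset α) {x : ℝ} (hx : x ∈ U) :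
    iteratedDeriv #s (fun y => exp (f y)) x =
      exp (f x) * ∑ P : Finpartition s, ∏ B ∈ P.parts, iteratedDeriv #B f x := by
  induction s using Finset.induction_on generalizing x with
  | empty =>
    -- `∅` is `⊥` only up to unfolding, so the `Unique` instance has to be transported by hand.
    have : Unique (Finpartition (∅ : Finset α)) :=
      inferInstanceAs (Unique (Finpartition (⊥ : Finset α)))
    simp [Finpartition.parts_eq_empty_iff.2 (rfl : (∅ : Finset α) = ⊥)]
  | insert a s ha ih =>
    have hΦ : HasDerivAt (fun y => ∑ P : Finpartition s, ∏ B ∈ P.parts, iteratedDeriv #B f y)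
        (∑ P : Finpartition s, ∑ C ∈ P.parts,
          (∏ B ∈ P.parts.erase C, iteratedDeriv #B f x) • iteratedDeriv (#C + 1) f x) x :=
      HasDerivAt.fun_sum fun P _ => HasDerivAt.fun_finsetProd fun B _ =>
        (hf.of_le (mod_cast le_top)).hasDerivAt_iteratedDeriv hU hx
    have hexp : HasDerivAt (fun y => exp (f y)) (exp (f x) * iteratedDeriv 1 f x) x :=
      (by simpa using (hf.of_le (mod_cast le_top)).hasDerivAt_iteratedDeriv (n := 0) hU hx :
        HasDerivAt f _ x).exp
    have heq : iteratedDeriv #s (fun y => exp (f y)) =ᶠ[𝓝 x]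
        fun y => exp (f y) * ∑ P : Finpartition s, ∏ B ∈ P.parts, iteratedDeriv #B f y :=
      eventually_of_mem (hU.mem_nhds hx) @ih
    rw [card_insert_of_notMem ha, iteratedDeriv_succ, heq.deriv_eq, (hexp.fun_mul hΦ).deriv,
      Finpartition.sum_prod_parts_insert ha, Finset.card_singleton, mul_assoc, ← mul_add,
      sum_add_distrib, mul_sum]
    congr 2
    refine sum_congr rfl fun P _ => sum_congr rfl fun C hC => ?_
    rw [card_insert_of_notMem fun h => ha (P.subset hC h), smul_eq_mul, mul_comm]

lemma Real.contDiffOn_Gamma : ContDiffOn ℝ ∞ Real.Gamma (Ioi 0) := by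
  have hU : IsOpen {z : ℂ | 0 < z.re} := isOpen_lt continuous_const Complex.continuous_re
  have hΓ : ContDiffOn ℂ ∞ Complex.Gamma {z : ℂ | 0 < z.re} := by
    refine DifferentiableOn.contDiffOn (fun z hz => ?_) hU
    refine (Complex.differentiableAt_Gamma z fun m hm => ?_).differentiableWithinAt
    have : 0 < z.re := hz
    simp only [hm, Complex.neg_re, Complex.natCast_re, Left.neg_pos_iff] at this
    exact (Nat.cast_nonneg m).not_gt this
  intro x hx
  have hx' : (x : ℂ) ∈ {z : ℂ | 0 < z.re} := by simpa using hx
  have h := Complex.reCLM.contDiff.contDiffAt.comp x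
    (((hΓ.contDiffAt (hU.mem_nhds hx')).restrict_scalars ℝ).comp x
      Complex.ofRealCLM.contDiff.contDiffAt)
  simpa [Function.comp_def, Complex.Gamma_ofReal] using h.contDiffWithinAt

lemma Real.contDiffOn_log_Gamma : ContDiffOn ℝ ∞ (fun x => Real.log (Real.Gamma x)) (Ioi 0) :=
  Real.contDiffOn_Gamma.log fun _ hx => (Real.Gamma_pos_of_pos hx).ne'

noncomputable def logBeta (a b : ℝ) : ℝ :=
  Real.log (Real.Gamma a) + Real.log (Real.Gamma b) - Real.log (Real.Gamma (a + b))

lemma exp_logBeta {a b : ℝ} (ha : 0 < a) (hb : 0 < b) :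
    Real.exp (logBeta a b) = ProbabilityTheory.beta a b := by
  rw [logBeta, Real.exp_sub, Real.exp_add, Real.exp_log (Real.Gamma_pos_of_pos ha),
    Real.exp_log (Real.Gamma_pos_of_pos hb), Real.exp_log (Real.Gamma_pos_of_pos (add_pos ha hb)),
    ProbabilityTheory.beta]

lemma contDiffOn_logBeta {b : ℝ} (hb : 0 < b) : ContDiffOn ℝ ∞ (fun a => logBeta a b) (Ioi 0) :=
  (Real.contDiffOn_log_Gamma.add contDiffOn_const).sub
    (Real.contDiffOn_log_Gamma.comp (contDiffOn_id.add contDiffOn_const)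
      fun _ ha => add_pos ha hb)

lemma iteratedDeriv_logBeta {a b : ℝ} (ha : 0 < a) (hb : 0 < b) {n : ℕ} (hn : n ≠ 0) :
    iteratedDeriv n (fun a => logBeta a b) a = polygamma (n - 1) a - polygamma (n - 1) (a + b) := by
  have hlogΓ {x : ℝ} (hx : 0 < x) : ContDiffAt ℝ n (fun x => Real.log (Real.Gamma x)) x :=
    (Real.contDiffOn_log_Gamma.contDiffAt (Ioi_mem_nhds hx)).of_le (by exact_mod_cast le_top)
  have hshift : ContDiffAt ℝ n (fun x => Real.log (Real.Gamma (x + b))) a :=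
    (hlogΓ (add_pos ha hb)).comp a (contDiffAt_id.add contDiffAt_const)
  have hcomp := congrFun (iteratedDeriv_comp_add_const n (fun x => Real.log (Real.Gamma x)) b) a
  simp only [logBeta] at hcomp ⊢
  rw [iteratedDeriv_fun_sub ((hlogΓ ha).add contDiffAt_const) hshift,
    iteratedDeriv_fun_add (hlogΓ ha) contDiffAt_const, iteratedDeriv_const, if_neg hn, add_zero,
    hcomp, polygamma, polygamma, Nat.sub_add_cancel (Nat.one_le_iff_ne_zero.2 hn)]

section BetaIntegral

open Real

variable {a b : ℝ}

lemma setIntegral_beta_integrand (ha : 0 < a) (hb : 0 < b) :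
    ∫ x in Ioo (0:ℝ) 1, x ^ (a - 1) * (1 - x) ^ (b - 1) = ProbabilityTheory.beta a b := by
  have hβ := ProbabilityTheory.beta_pos ha hb
  have h := ProbabilityTheory.lintegral_betaPDF_eq_one ha hb
  rw [ProbabilityTheory.lintegral_betaPDF, ← ENNReal.toReal_eq_one_iff,
    ← integral_eq_lintegral_of_nonneg_ae] at h
  · simp_rw [mul_assoc, integral_const_mul] at h
    field_simp at h
    exact h
  · refine ae_restrict_of_forall_mem measurableSet_Ioo fun x ⟨hx0, hx1⟩ => ?_
    have h1x : 0 < 1 - x := by linarith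
    positivity
  · exact Measurable.aestronglyMeasurable (by fun_prop)

lemma integrableOn_beta_integrand (ha : 0 < a) (hb : 0 < b) :
    IntegrableOn (fun x => x ^ (a - 1) * (1 - x) ^ (b - 1)) (Ioo (0:ℝ) 1) :=
  Integrable.of_integral_ne_zero <| by
    rw [setIntegral_beta_integrand ha hb]; exact (ProbabilityTheory.beta_pos ha hb).ne'

lemma abs_log_pow_mul_rpow_le {x t : ℝ} (hx0 : 0 < x) (hx1 : x ≤ 1) (ht : 0 < t) (n : ℕ) :
    |log x| ^ n * x ^ (t * n) ≤ (1 / t) ^ n := by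
  rw [rpow_mul_natCast hx0.le, ← mul_pow, ← abs_of_pos (rpow_pos_of_pos hx0 t), ← abs_mul]
  exact pow_le_pow_left₀ (abs_nonneg _) (abs_log_mul_self_rpow_lt x t hx0 hx1 ht).le n

lemma integrableOn_beta_integrand_mul_abs_log_pow (ha : 0 < a) (hb : 0 < b) (n : ℕ) :
    IntegrableOn (fun x => x ^ (a - 1) * (1 - x) ^ (b - 1) * |log x| ^ n) (Ioo (0:ℝ) 1) := by
  -- `|log x| ^ n ≤ t⁻ⁿ x^(-t n)` with `t n ≤ a / 2` costs at most half of the exponent `a`.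
  set t := a / (2 * (n + 1))
  have ht : 0 < t := by positivity
  have htn : t * n ≤ a / 2 := by
    rw [div_mul_eq_mul_div, div_le_div_iff₀ (by positivity) two_pos]
    nlinarith
  refine ((integrableOn_beta_integrand (half_pos ha) hb).const_mul ((1 / t) ^ n)).mono'
    (Measurable.aestronglyMeasurable (by fun_prop)) ?_
  refine ae_restrict_of_forall_mem measurableSet_Ioo fun x ⟨hx0, hx1⟩ => ?_
  have h1x : 0 < (1 - x) ^ (b - 1) := rpow_pos_of_pos (by linarith) _
  rw [Real.norm_of_nonneg (by positivity)]
  calc x ^ (a - 1) * (1 - x) ^ (b - 1) * |log x| ^ n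
      = (|log x| ^ n * x ^ (t * n)) * (x ^ (a - 1 - t * n) * (1 - x) ^ (b - 1)) := by
        rw [sub_eq_add_neg (a - 1), rpow_add hx0, rpow_neg hx0.le]
        field_simp
    _ ≤ (1 / t) ^ n * (x ^ (a / 2 - 1) * (1 - x) ^ (b - 1)) :=
        mul_le_mul (abs_log_pow_mul_rpow_le hx0 hx1.le ht n)
          (mul_le_mul_of_nonneg_right (rpow_le_rpow_of_exponent_ge hx0 hx1.le (by linarith))
            h1x.le) (by positivity) (by positivity)

lemma integrableOn_beta_integrand_mul_log_pow (ha : 0 < a) (hb : 0 < b) (n : ℕ) :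
    IntegrableOn (fun x => x ^ (a - 1) * (1 - x) ^ (b - 1) * log x ^ n) (Ioo (0:ℝ) 1) := by
  refine (integrableOn_beta_integrand_mul_abs_log_pow ha hb n).mono'
    (Measurable.aestronglyMeasurable (by fun_prop)) ?_
  refine ae_restrict_of_forall_mem measurableSet_Ioo fun x ⟨hx0, hx1⟩ => ?_
  have h1x : 0 < (1 - x) ^ (b - 1) := rpow_pos_of_pos (by linarith) _
  rw [Real.norm_eq_abs, abs_mul, abs_pow,
    abs_of_nonneg (by positivity : 0 ≤ x ^ (a - 1) * (1 - x) ^ (b - 1))]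

noncomputable def betaLogIntegral (b : ℝ) (k : ℕ) (a : ℝ) : ℝ :=
  ∫ x in Ioo (0:ℝ) 1, x ^ (a - 1) * (1 - x) ^ (b - 1) * log x ^ k

lemma hasDerivAt_betaLogIntegral (ha : 0 < a) (hb : 0 < b) (k : ℕ) :
    HasDerivAt (betaLogIntegral b k) (betaLogIntegral b (k + 1) a) a := by
  have hmeas (c : ℝ) (n : ℕ) : AEStronglyMeasurable
      (fun x : ℝ => x ^ (c - 1) * (1 - x) ^ (b - 1) * log x ^ n) (volume.restrict (Ioo 0 1)) :=
    Measurable.aestronglyMeasurable (by fun_prop)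
  refine (hasDerivAt_integral_of_dominated_loc_of_deriv_le
    (F' := fun c x => x ^ (c - 1) * (1 - x) ^ (b - 1) * log x ^ (k + 1))
    (Ioi_mem_nhds (half_lt_self ha))
    (Eventually.of_forall fun c => hmeas c k) (integrableOn_beta_integrand_mul_log_pow ha hb k)
    (hmeas a (k + 1)) ?_ (integrableOn_beta_integrand_mul_abs_log_pow (half_pos ha) hb (k + 1))
    ?_).2
  · refine ae_restrict_of_forall_mem measurableSet_Ioo fun x ⟨hx0, hx1⟩ c hc => ?_
    have h1x : 0 < (1 - x) ^ (b - 1) := rpow_pos_of_pos (by linarith) _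
    rw [Real.norm_eq_abs, abs_mul, abs_pow,
      abs_of_nonneg (by positivity : 0 ≤ x ^ (c - 1) * (1 - x) ^ (b - 1))]
    refine mul_le_mul_of_nonneg_right (mul_le_mul_of_nonneg_right ?_ h1x.le) (by positivity)
    exact rpow_le_rpow_of_exponent_ge hx0 hx1.le (by linarith [mem_Ioi.1 hc])
  · refine ae_restrict_of_forall_mem measurableSet_Ioo fun x ⟨hx0, _⟩ c _ => ?_
    refine ((((hasDerivAt_id c).sub_const 1).const_rpow hx0).mul_const ((1 - x) ^ (b - 1))
      |>.mul_const (log x ^ k)).congr_deriv ?_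
    simp only [id]
    ring

lemma betaLogIntegral_eq_iteratedDeriv (ha : 0 < a) (hb : 0 < b) (k : ℕ) :
    betaLogIntegral b k a = iteratedDeriv k (fun a => exp (logBeta a b)) a := by
  have h0 : betaLogIntegral b 0 =ᶠ[𝓝 a] fun a => exp (logBeta a b) :=
    eventually_of_mem (Ioi_mem_nhds ha) fun c hc => by
      simp [betaLogIntegral, setIntegral_beta_integrand hc hb, exp_logBeta hc hb]
  rw [← (h0.iteratedDeriv k).eq_of_nhds,
    iteratedDeriv_eq_of_hasDerivAt_succ isOpen_Ioi
      (fun n _ hc => hasDerivAt_betaLogIntegral hc hb n) k ha]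

end BetaIntegral

lemma integral_betaMeasure {a b : ℝ} (ha : 0 < a) (hb : 0 < b) (g : ℝ → ℝ) :
    ∫ x, g x ∂betaMeasure a b = (ProbabilityTheory.beta a b)⁻¹ *
      ∫ x in Ioo (0:ℝ) 1, x ^ (a - 1) * (1 - x) ^ (b - 1) * g x := by
  have hdens : Measurable fun x : ℝ => if x ∈ Ioo (0:ℝ) 1 then
      Real.Gamma (a + b) / (Real.Gamma a * Real.Gamma b) * x ^ (a - 1) * (1 - x) ^ (b - 1)
      else 0 :=
    Measurable.ite measurableSet_Ioo (by fun_prop) measurable_const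
  rw [betaMeasure, integral_withDensity_eq_integral_toReal_smul hdens.ennreal_ofReal
    (Eventually.of_forall fun _ => ENNReal.ofReal_lt_top), ← integral_const_mul,
    ← integral_indicator measurableSet_Ioo]
  refine integral_congr_ae (Eventually.of_forall fun x => ?_)
  dsimp only
  by_cases hx : x ∈ Ioo (0:ℝ) 1
  · have h1x : 0 < (1 - x) ^ (b - 1) := Real.rpow_pos_of_pos (by linarith [hx.2]) _
    have hc : 0 < Real.Gamma (a + b) / (Real.Gamma a * Real.Gamma b) := by
      rw [← inv_div]; exact inv_pos.2 (ProbabilityTheory.beta_pos ha hb)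
    have hx0 := hx.1
    rw [if_pos hx, indicator_of_mem hx, ENNReal.toReal_ofReal (by positivity), smul_eq_mul,
      ProbabilityTheory.beta, inv_div]
    ring
  · rw [if_neg hx, indicator_of_notMem hx, ENNReal.ofReal_zero, ENNReal.toReal_zero, zero_smul]

open Finset in
lemma filter_isSetPartition_eq_map_parts (k : ℕ) :
    (univ : Finset (Finset (Finset (Fin k)))).filter (IsSetPartition k) =
      (univ : Finset (Finpartition (univ : Finset (Fin k)))).map
        ⟨Finpartition.parts, fun _ _ => Finpartition.ext⟩ := by
  ext π
  simp only [Finset.mem_filter, Finset.mem_univ, true_and, Finset.mem_map]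
  constructor
  · intro h
    exact ⟨Finpartition.ofExistsUnique π (fun _ _ => subset_univ _) (fun x _ => h.2 x)
      (fun h0 => not_nonempty_empty (h.1 ∅ h0)), rfl⟩
  · rintro ⟨P, rfl⟩
    exact ⟨fun B hB => P.nonempty_of_mem_parts hB, fun x => P.existsUnique_mem (mem_univ x)⟩

theorem log_beta_moments_general (ζ η : ℝ) (hζ : 0 < ζ) (hη : 0 < η) (k : ℕ) :
    ∫ x, (Real.log x) ^ k ∂(betaMeasure ζ η)
      = ∑ π ∈ (Finset.univ : Finset (Finset (Finset (Fin k)))).filter (IsSetPartition k),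
          ∏ B ∈ π, (polygamma (B.card - 1) ζ - polygamma (B.card - 1) (ζ + η)) := by
  have hFdB := iteratedDeriv_exp_comp isOpen_Ioi (contDiffOn_logBeta hη)
    (Finset.univ : Finset (Fin k)) hζ
  rw [Finset.card_univ, Fintype.card_fin, exp_logBeta hζ hη] at hFdB
  rw [filter_isSetPartition_eq_map_parts, Finset.sum_map, integral_betaMeasure hζ hη]
  change _ * betaLogIntegral η k ζ = _
  rw [betaLogIntegral_eq_iteratedDeriv hζ hη, hFdB,
    inv_mul_cancel_left₀ (ProbabilityTheory.beta_pos hζ hη).ne']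
  refine Finset.sum_congr rfl fun P _ => Finset.prod_congr rfl fun B hB => ?_
  exact iteratedDeriv_logBeta hζ hη (P.nonempty_of_mem_parts hB).card_pos.ne'

/-- Moments of the log of a beta random variable:
`E[(log β_{ζ,η})^k] = Σ_{π ∈ P_k} Π_{Γ ∈ π} q_{#Γ}(ζ,η)` where
`q_j(ζ,η) = ψ_{j-1}(ζ) - ψ_{j-1}(ζ+η)`. -/
theorem log_beta_moments (ζ η : ℝ) (hζ : 0 < ζ) (hη : 0 < η) (k : ℕ) (hk : 1 ≤ k) :
    ∫ x, (Real.log x) ^ k ∂(betaMeasure ζ η)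
      = ∑ π ∈ (Finset.univ : Finset (Finset (Finset (Fin k)))).filter (IsSetPartition k),
          ∏ B ∈ π, (polygamma (B.card - 1) ζ - polygamma (B.card - 1) (ζ + η)) :=
  log_beta_moments_general ζ η hζ hη k
end

section
/- For integers 1 ≤ p ≤ n define (σ_{n,p})^2 := (1/4) Σ_{j=1}^{p-1} (ψ_1((n-j)/2) - ψ_1(n/2)). Then (σ_{n,p})^2 ≥ (1/2)[ -log(1 - (p-1)/n) - ((p-1)/n)(1 + 3/(2n)) ]. -/
/-!
On `(0, ∞)` the trigamma function is `ψ₁(x) = ∑ₘ 1/(x+m)²`: this follows by differentiating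
twice the Euler limit `log Γ(x) = lim_N (x log N + log N! - ∑_{m ≤ N} log (x+m))`, the
derivatives converging uniformly near every point. Comparing the terms of this series with
telescoping differences gives `1/x + 1/(2x²) ≤ ψ₁(x) ≤ 1/x + 1/x²`, so for `y = n - j`
`ψ₁(y/2) - ψ₁(n/2) ≥ 2/y - 2/n - 2/n² ≥ 2 (log (y+1) - log y) - 2/n - 2/n²`,
and summed over `1 ≤ j ≤ p - 1` the logarithms telescope to `-2 log (1 - (p-1)/n)`.
-/

open Real Filter Topology Set

noncomputable def trigammaSeries (x : ℝ) : ℝ := ∑' m : ℕ, 1 / (x + m) ^ 2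

noncomputable def digammaSeries (x : ℝ) : ℝ :=
  -eulerMascheroniConstant + ∑' m : ℕ, (1 / (m + 1) - 1 / (x + m))

lemma summable_one_div_add_sq {x : ℝ} (hx : 0 < x) :
    Summable fun m : ℕ => 1 / (x + m) ^ 2 :=
  ((summable_one_div_nat_add_rpow x 2).mpr one_lt_two).congr fun m => by
    rw [abs_of_pos (by positivity), rpow_two, add_comm]

lemma tendsto_one_div_add_atTop (x : ℝ) :
    Tendsto (fun m : ℕ => 1 / (x + m)) atTop (𝓝 0) := by
  simp only [one_div]
  exact tendsto_inv_atTop_zero.comp (tendsto_atTop_add_const_left _ x tendsto_natCast_atTop_atTop)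

lemma hasDerivAt_one_div_add {x : ℝ} (m : ℕ) (hx : 0 < x) :
    HasDerivAt (fun y : ℝ => 1 / (y + m)) (-(1 / (x + m) ^ 2)) x := by
  simpa only [one_div] using (hasDerivAt_inv (by positivity : x + m ≠ 0)).comp_add_const x (m : ℝ)

lemma hasDerivAt_digammaSeries {x : ℝ} (hx : 0 < x) :
    HasDerivAt digammaSeries (trigammaSeries x) x := by
  obtain ⟨c, hc, hcx⟩ := exists_between (lt_min hx one_pos)
  rw [lt_min_iff] at hcx
  have hderiv : ∀ (m : ℕ) y, y ∈ Ioi c →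
      HasDerivAt (fun z : ℝ => 1 / ((m : ℝ) + 1) - 1 / (z + m)) (1 / (y + m) ^ 2) y :=
    fun m y hy => by simpa using (hasDerivAt_one_div_add m (hc.trans hy)).const_sub _
  have hbound : ∀ (m : ℕ) y, y ∈ Ioi c → ‖1 / (y + m) ^ 2‖ ≤ 1 / (c + m) ^ 2 := by
    intro m y hy
    have hy' : c < y := hy
    rw [Real.norm_of_nonneg (by positivity)]
    gcongr
  have hsum1 : Summable fun m : ℕ => 1 / ((m : ℝ) + 1) - 1 / (1 + m) :=
    summable_zero.congr fun m => by rw [add_comm (1 : ℝ), sub_self]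
  exact (hasDerivAt_tsum_of_isPreconnected (summable_one_div_add_sq hc) isOpen_Ioi
    isPreconnected_Ioi hderiv hbound hcx.2 hsum1 hcx.1).const_add _

lemma hasDerivAt_logGammaSeq (n : ℕ) {x : ℝ} (hx : 0 < x) :
    HasDerivAt (BohrMollerup.logGammaSeq · n)
      (log n - ∑ m ∈ Finset.range (n + 1), 1 / (x + m)) x := by
  have hlog : ∀ m ∈ Finset.range (n + 1), HasDerivAt (fun y : ℝ => log (y + m)) (1 / (x + m)) x :=
    fun m _ => by simpa [one_div] using ((hasDerivAt_id x).add_const (m : ℝ)).log (by positivity)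
  unfold BohrMollerup.logGammaSeq
  simpa using (((hasDerivAt_id x).mul_const (log n)).add_const (log (n.factorial : ℝ))).fun_sub
    (HasDerivAt.fun_sum hlog)

lemma tendsto_log_sub_sum_range_succ :
    Tendsto (fun N : ℕ => log N - ∑ m ∈ Finset.range (N + 1), 1 / ((m : ℝ) + 1)) atTop
      (𝓝 (-eulerMascheroniConstant)) := by
  have h := ((tendsto_harmonic_sub_log.comp (tendsto_add_atTop_nat 1)).add
    tendsto_log_nat_add_one_sub_log).neg
  rw [add_zero] at h
  refine h.congr fun N => ?_
  simp [harmonic, one_div]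

lemma abs_one_div_succ_sub_one_div_add_le {a b y : ℝ} (ha : 0 < a) (ha1 : a ≤ 1)
    (hy : y ∈ Ioo a b) (m : ℕ) :
    |1 / ((m : ℝ) + 1) - 1 / (y + m)| ≤ (b + 1) * (1 / (a + m) ^ 2) := by
  obtain ⟨hay, hyb⟩ := hy
  have hy0 : 0 < y := ha.trans hay
  have hm : (0 : ℝ) ≤ m := m.cast_nonneg
  have hnum : |y - 1| ≤ b + 1 := abs_le.mpr ⟨by linarith, by linarith⟩
  have hden : 1 / (((m : ℝ) + 1) * (y + m)) ≤ 1 / (a + m) ^ 2 := by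
    apply one_div_le_one_div_of_le (by positivity)
    rw [sq]
    exact mul_le_mul (by linarith) (by linarith) (by positivity) (by positivity)
  calc |1 / ((m : ℝ) + 1) - 1 / (y + m)| = |y - 1| * (1 / (((m : ℝ) + 1) * (y + m))) := by
        rw [← abs_of_pos (by positivity : 0 < 1 / (((m : ℝ) + 1) * (y + m))), ← abs_mul]
        congr 1
        field_simp
        ring
    _ ≤ (b + 1) * (1 / (a + m) ^ 2) := by gcongr; linarith

lemma tendstoUniformlyOn_digammaSeries {a b : ℝ} (ha : 0 < a) (ha1 : a ≤ 1) :
    TendstoUniformlyOn (fun (N : ℕ) (y : ℝ) => log N - ∑ m ∈ Finset.range (N + 1), 1 / (y + m))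
      digammaSeries atTop (Ioo a b) := by
  have hseries := tendstoUniformlyOn_tsum_nat ((summable_one_div_add_sq ha).mul_left (b + 1))
    (f := fun (m : ℕ) (y : ℝ) => 1 / ((m : ℝ) + 1) - 1 / (y + m))
    fun m y hy => abs_one_div_succ_sub_one_div_add_le ha ha1 hy m
  have hseries' : TendstoUniformlyOn
      (fun (N : ℕ) (y : ℝ) => ∑ m ∈ Finset.range (N + 1), (1 / ((m : ℝ) + 1) - 1 / (y + m)))
      (fun y => ∑' m : ℕ, (1 / ((m : ℝ) + 1) - 1 / (y + m))) atTop (Ioo a b) :=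
    fun u hu => (tendsto_add_atTop_nat 1).eventually (hseries u hu)
  refine ((tendsto_log_sub_sum_range_succ.tendstoUniformlyOn_const _).add hseries').congr
    (Eventually.of_forall fun N y _ => ?_)
  simp only [Pi.add_apply, Finset.sum_sub_distrib]
  ring

lemma hasDerivAt_log_Gamma {x : ℝ} (hx : 0 < x) :
    HasDerivAt (fun y => log (Gamma y)) (digammaSeries x) x := by
  obtain ⟨a, ha, hax⟩ := exists_between (lt_min hx one_pos)
  rw [lt_min_iff] at hax
  exact hasDerivAt_of_tendstoUniformlyOn isOpen_Ioo
    (tendstoUniformlyOn_digammaSeries ha (b := x + 1) hax.2.le)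
    (Eventually.of_forall fun n y hy => hasDerivAt_logGammaSeq n (ha.trans hy.1))
    (fun y hy => BohrMollerup.tendsto_log_gamma (ha.trans hy.1)) ⟨hax.1, lt_add_one x⟩

lemma polygamma_one_eq_trigammaSeries {x : ℝ} (hx : 0 < x) :
    polygamma 1 x = trigammaSeries x := by
  have hderiv : deriv (fun y => log (Gamma y)) =ᶠ[𝓝 x] digammaSeries :=
    eventually_of_mem (isOpen_Ioi.mem_nhds hx) fun y hy => (hasDerivAt_log_Gamma hy).deriv
  rw [polygamma, iteratedDeriv_succ, iteratedDeriv_one, hderiv.deriv_eq]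
  exact (hasDerivAt_digammaSeries hx).deriv

lemma tendsto_sum_range_sub_succ {g : ℕ → ℝ} (hg : Tendsto g atTop (𝓝 0)) :
    Tendsto (fun N => ∑ m ∈ Finset.range N, (g m - g (m + 1))) atTop (𝓝 (g 0)) := by
  simp only [Finset.sum_range_sub']
  simpa using (tendsto_const_nhds (x := g 0)).sub hg

lemma tsum_le_of_le_sub_succ {f g : ℕ → ℝ} (hf : Summable f) (hg : Tendsto g atTop (𝓝 0))
    (h : ∀ m, f m ≤ g m - g (m + 1)) : ∑' m, f m ≤ g 0 :=
  le_of_tendsto_of_tendsto' hf.hasSum.tendsto_sum_nat (tendsto_sum_range_sub_succ hg)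
    fun _ => Finset.sum_le_sum fun m _ => h m

lemma le_tsum_of_sub_succ_le {f g : ℕ → ℝ} (hf : Summable f) (hg : Tendsto g atTop (𝓝 0))
    (h : ∀ m, g m - g (m + 1) ≤ f m) : g 0 ≤ ∑' m, f m :=
  le_of_tendsto_of_tendsto' (tendsto_sum_range_sub_succ hg) hf.hasSum.tendsto_sum_nat
    fun _ => Finset.sum_le_sum fun m _ => h m

lemma sub_succ_le_one_div_sq {t : ℝ} (ht : 0 < t) :
    (1 / t + 1 / (2 * t ^ 2)) - (1 / (t + 1) + 1 / (2 * (t + 1) ^ 2)) ≤ 1 / t ^ 2 := by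
  have h : 1 / t ^ 2 - ((1 / t + 1 / (2 * t ^ 2)) - (1 / (t + 1) + 1 / (2 * (t + 1) ^ 2)))
      = 1 / (2 * t ^ 2 * (t + 1) ^ 2) := by
    field_simp; ring
  linarith [show 0 < 1 / (2 * t ^ 2 * (t + 1) ^ 2) by positivity]

lemma one_div_succ_sq_le_sub {t : ℝ} (ht : 0 < t) : 1 / (t + 1) ^ 2 ≤ 1 / t - 1 / (t + 1) := by
  rw [div_sub_div _ _ ht.ne' (by positivity), sq]
  gcongr <;> linarith

lemma one_div_add_one_div_two_mul_sq_le_trigammaSeries {x : ℝ} (hx : 0 < x) :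
    1 / x + 1 / (2 * x ^ 2) ≤ trigammaSeries x := by
  have hg : Tendsto (fun m : ℕ => 1 / (x + m) + 1 / (2 * (x + m) ^ 2)) atTop (𝓝 0) := by
    have h := (tendsto_one_div_add_atTop x).add (((tendsto_one_div_add_atTop x).pow 2).div_const 2)
    rw [zero_pow two_ne_zero, zero_div, add_zero] at h
    exact h.congr fun m => by rw [div_pow, one_pow, div_div, mul_comm]
  have := le_tsum_of_sub_succ_le (summable_one_div_add_sq hx) hg fun m => by
    push_cast
    rw [← add_assoc]
    exact sub_succ_le_one_div_sq (by positivity)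
  simpa [trigammaSeries] using this

lemma trigammaSeries_le_one_div_add_one_div_sq {x : ℝ} (hx : 0 < x) :
    trigammaSeries x ≤ 1 / x + 1 / x ^ 2 := by
  have hsum := summable_one_div_add_sq hx
  have htail := tsum_le_of_le_sub_succ ((summable_nat_add_iff 1).mpr hsum)
      (tendsto_one_div_add_atTop x) fun m => by
    push_cast
    rw [← add_assoc]
    exact one_div_succ_sq_le_sub (by positivity)
  rw [trigammaSeries, hsum.tsum_eq_zero_add]
  simp only [Nat.cast_add, Nat.cast_one, CharP.cast_eq_zero, add_zero] at htail ⊢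
  linarith

lemma log_add_one_sub_log_le {y : ℝ} (hy : 0 < y) : log (y + 1) - log y ≤ 1 / y := by
  rw [← log_div (by positivity) hy.ne']
  calc log ((y + 1) / y) ≤ (y + 1) / y - 1 := log_le_sub_one_of_pos (by positivity)
    _ = 1 / y := by field_simp; ring

lemma two_mul_log_sub_le_trigammaSeries_sub {y N : ℝ} (hy : 0 < y) (hyN : y ≤ N) :
    2 * (log (y + 1) - log y) - (2 / N + 2 / N ^ 2)
      ≤ trigammaSeries (y / 2) - trigammaSeries (N / 2) := by
  have hlower := one_div_add_one_div_two_mul_sq_le_trigammaSeries (half_pos hy)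
  have hupper := trigammaSeries_le_one_div_add_one_div_sq (half_pos (hy.trans_le hyN))
  have hlog := log_add_one_sub_log_le hy
  have hsq : 1 / N ^ 2 ≤ 1 / y ^ 2 := by gcongr
  rw [show 1 / (y / 2) + 1 / (2 * (y / 2) ^ 2) = 2 * (1 / y) + 2 * (1 / y ^ 2) by
    field_simp] at hlower
  rw [show 1 / (N / 2) + 1 / (N / 2) ^ 2 = 2 * (1 / N) + 4 * (1 / N ^ 2) by
    field_simp; ring] at hupper
  rw [show 2 / N + 2 / N ^ 2 = 2 * (1 / N) + 2 * (1 / N ^ 2) by ring]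
  linarith

lemma sum_Icc_telescope (f : ℝ → ℝ) (x : ℝ) (q : ℕ) :
    ∑ j ∈ Finset.Icc 1 q, (f (x - j + 1) - f (x - j)) = f x - f (x - q) := by
  induction q with
  | zero => simp
  | succ q ih =>
    rw [Finset.sum_Icc_succ_top (by omega), ih]
    push_cast
    rw [show x - ((q : ℝ) + 1) + 1 = x - q by ring]
    ring

/-- Lower bound for the variance of the log-volume of a spherical random simplex:
for `1 ≤ p ≤ n`,
`σ²_{n,p} := (1/4) Σ_{j=1}^{p-1} (ψ₁((n-j)/2) - ψ₁(n/2))`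
satisfies `σ²_{n,p} ≥ (1/2)[-log(1-(p-1)/n) - ((p-1)/n)(1 + 3/(2n))]`. -/
theorem variance_lower_bound (p n : ℕ) (hp : 1 ≤ p) (hpn : p ≤ n) :
    (1/2 : ℝ) * (-Real.log (1 - ((p:ℝ) - 1)/n)
        - (((p:ℝ) - 1)/n) * (1 + 3/(2 * (n:ℝ))))
      ≤ (1/4 : ℝ) * ∑ j ∈ Finset.Icc 1 (p - 1),
          (polygamma 1 (((n:ℝ) - (j:ℝ))/2) - polygamma 1 ((n:ℝ)/2)) := by
  obtain ⟨q, rfl⟩ : ∃ q, p = q + 1 := ⟨p - 1, by omega⟩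
  have hqn : (q : ℝ) < n := by exact_mod_cast hpn
  have hn : (0 : ℝ) < n := by linarith [q.cast_nonneg (α := ℝ)]
  have hterm : ∀ j ∈ Finset.Icc 1 q, 2 * (log (n - j + 1) - log (n - j)) - (2 / n + 2 / n ^ 2)
      ≤ polygamma 1 ((n - j) / 2) - polygamma 1 (n / 2) := by
    intro j hj
    have hjq : (j : ℝ) ≤ q := by exact_mod_cast (Finset.mem_Icc.mp hj).2
    have hy : (0 : ℝ) < n - j := by linarith
    rw [polygamma_one_eq_trigammaSeries (by positivity),
      polygamma_one_eq_trigammaSeries (by positivity)]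
    exact two_mul_log_sub_le_trigammaSeries_sub hy (by linarith [j.cast_nonneg (α := ℝ)])
  have hsum := Finset.sum_le_sum hterm
  rw [Finset.sum_sub_distrib, ← Finset.mul_sum, sum_Icc_telescope log, Finset.sum_const,
    Nat.card_Icc, Nat.add_sub_cancel, nsmul_eq_mul] at hsum
  have hlog : log (1 - q / n) = log (n - q) - log n := by
    rw [one_sub_div hn.ne', log_div (by linarith) hn.ne']
  push_cast
  rw [add_sub_cancel_right, hlog]
  have hslack : 0 ≤ (q : ℝ) / n ^ 2 := by positivity
  have hlhs : (1 / 2 : ℝ) * (-(log (n - q) - log n) - q / n * (1 + 3 / (2 * n)))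
      = (1 / 4) * (2 * (log n - log (n - q)) - q * (2 / n + 2 / n ^ 2))
        - (1 / 4) * (q / n ^ 2) := by
    field_simp; ring
  linarith
end

section
/- Let f : ℝ → ℂ satisfy |log f(t) + t²/2| ≤ ε|t|³ for all t ∈ ℝ (for some branch choice with log f(0) = 0 and ε > 0). Then for all t with |t| ≤ 1/(4ε), one has |f(t) - e^{-t²/2}| ≤ ε|t|³ e^{-t²/4}. -/
/-!
Writing `f t = e^{-t²/2} e^{z}` with `‖z‖ ≤ ε|t|³`, we get
`‖f t - e^{-t²/2}‖ ≤ e^{-t²/2} ‖z‖ e^{‖z‖}`, and for `|t| ≤ 1/(4ε)` the factor `e^{‖z‖}`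
is absorbed since `ε|t|³ ≤ t²/4`.
-/

namespace Complex

theorem norm_exp_sub_one_le_norm_mul_exp (z : ℂ) : ‖exp z - 1‖ ≤ ‖z‖ * Real.exp ‖z‖ := by
  simpa using norm_exp_sub_sum_le_norm_mul_exp z 1

theorem norm_exp_sub_exp_le (w g : ℂ) :
    ‖exp w - exp g‖ ≤ ‖w - g‖ * Real.exp (g.re + ‖w - g‖) := by
  have hfactor : exp w - exp g = exp g * (exp (w - g) - 1) := by
    rw [mul_sub, ← exp_add, add_sub_cancel, mul_one]
  calc ‖exp w - exp g‖ = Real.exp g.re * ‖exp (w - g) - 1‖ := by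
        rw [hfactor, norm_mul, norm_exp]
    _ ≤ Real.exp g.re * (‖w - g‖ * Real.exp ‖w - g‖) := by
        gcongr; exact norm_exp_sub_one_le_norm_mul_exp _
    _ = ‖w - g‖ * Real.exp (g.re + ‖w - g‖) := by rw [Real.exp_add]; ring

end Complex

theorem mul_abs_pow_three_le_sq_div_four {ε t : ℝ} (hε : 0 < ε) (ht : |t| ≤ 1 / (4 * ε)) :
    ε * |t| ^ 3 ≤ t ^ 2 / 4 := by
  have hscaled : |t| * (4 * ε) ≤ 1 := (le_div_iff₀ (by positivity)).mp ht
  calc ε * |t| ^ 3 = |t| * (4 * ε) * (|t| ^ 2 / 4) := by ring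
    _ ≤ 1 * (|t| ^ 2 / 4) := by gcongr
    _ = t ^ 2 / 4 := by rw [one_mul, sq_abs]

theorem char_fun_comparison_general (f : ℝ → ℂ) (L : ℝ → ℂ) (ε : ℝ) (hε : 0 < ε)
    (hfL : ∀ t, f t = Complex.exp (L t))
    (hbound : ∀ t : ℝ, ‖L t + (t:ℂ) ^ 2 / 2‖ ≤ ε * |t| ^ 3) :
    ∀ t : ℝ, |t| ≤ 1 / (4 * ε) →
      ‖f t - Real.exp (-t ^ 2 / 2)‖
        ≤ ε * |t| ^ 3 * Real.exp (-t ^ 2 / 4) := by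
  intro t ht
  set g : ℂ := -(t : ℂ) ^ 2 / 2
  have hg : ((Real.exp (-t ^ 2 / 2) : ℝ) : ℂ) = Complex.exp g := by push_cast; rfl
  have hg_re : g.re = -t ^ 2 / 2 := by simp [g, ← Complex.ofReal_pow]
  have hdist : ‖L t - g‖ ≤ ε * |t| ^ 3 := by
    simpa [g, sub_eq_add_neg, neg_div] using hbound t
  have hcube := mul_abs_pow_three_le_sq_div_four hε ht
  calc ‖f t - Real.exp (-t ^ 2 / 2)‖ ≤ ‖L t - g‖ * Real.exp (g.re + ‖L t - g‖) := by
        rw [hfL, hg]; exact Complex.norm_exp_sub_exp_le _ _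
    _ ≤ ε * |t| ^ 3 * Real.exp (-t ^ 2 / 2 + ε * |t| ^ 3) := by rw [hg_re]; gcongr
    _ ≤ ε * |t| ^ 3 * Real.exp (-t ^ 2 / 4) := by gcongr; linarith

/-- If `L` is a logarithm of `f` with `L 0 = 0` and `|L t + t²/2| ≤ ε|t|³` for all `t`,
then for `|t| ≤ 1/(4ε)` we have `|f t - e^{-t²/2}| ≤ ε|t|³ e^{-t²/4}`. -/
theorem char_fun_comparison (f : ℝ → ℂ) (L : ℝ → ℂ) (ε : ℝ) (hε : 0 < ε)
    (hfL : ∀ t, f t = Complex.exp (L t)) (hL0 : L 0 = 0)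
    (hbound : ∀ t : ℝ, ‖L t + (t:ℂ) ^ 2 / 2‖ ≤ ε * |t| ^ 3) :
    ∀ t : ℝ, |t| ≤ 1 / (4 * ε) →
      ‖f t - Real.exp (-t ^ 2 / 2)‖
        ≤ ε * |t| ^ 3 * Real.exp (-t ^ 2 / 4) :=
  char_fun_comparison_general f L ε hε hfL hbound
end

section
/- For integers 7 ≤ p ≤ n and θ := (p-1)/n, we have Σ_{j=1}^{p-1} [1/(n-j)² - 1/n²] ≤ (9/2)·θ²/(n(1-θ)). -/
lemma key_poly (m N : ℝ) (hm : 1 ≤ m) (hN : m + 6 ≤ N) :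
    N^2*m - m*(m-1/2)*(N-1/2) ≤ (9/2)*(N-m)*(m-1/2)*(N-1/2) := by
  nlinarith [mul_nonneg (sub_nonneg.2 hm) (show (0:ℝ) ≤ N - m - 6 by linarith),
    mul_nonneg (sub_nonneg.2 hm) (show (0:ℝ) ≤ N by linarith),
    mul_nonneg (show (0:ℝ) ≤ N - m - 6 by linarith) (show (0:ℝ) ≤ N by linarith),
    sq_nonneg (N - m), sq_nonneg m, sq_nonneg (N - m - 6)]

lemma final_ineq (x N : ℝ) (hx : 7 ≤ x) (hxN : x ≤ N) :
    (1/(N - x + 1/2) - 1/(N - 1/2)) - (x-1)/N^2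
      ≤ (9/2) * ((x-1)/N)^2 / (N*(1 - (x-1)/N)) := by
  have hN : (0:ℝ) < N := by linarith
  have ha : (0:ℝ) < N - x + 1/2 := by linarith
  have hb : (0:ℝ) < N - 1/2 := by linarith
  have hm : (0:ℝ) < N - x + 1 := by linarith
  have hNne : N ≠ 0 := ne_of_gt hN
  have hane : N - x + 1/2 ≠ 0 := ne_of_gt ha
  have hbne : N - 1/2 ≠ 0 := ne_of_gt hb
  have hmne : N - x + 1 ≠ 0 := ne_of_gt hm
  have hrhs : (9/2 : ℝ) * ((x-1)/N)^2 / (N*(1 - (x-1)/N))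
      = (9/2)*(x-1)^2/(N^2*(N-x+1)) := by
    have h1 : 1 - (x-1)/N = (N-x+1)/N := by field_simp; ring
    have h2 : N * ((N-x+1)/N) = N-x+1 := by field_simp
    rw [h1, h2, div_pow, ← mul_div_assoc, div_div]
  rw [hrhs]
  have hlhs : (1/(N - x + 1/2) - 1/(N - 1/2)) - (x-1)/N^2
      = ((x-1)*(N^2 - (N-x+1/2)*(N-1/2)))/((N-x+1/2)*((N-1/2)*N^2)) := by
    rw [div_sub_div _ _ (ne_of_gt ha) (ne_of_gt hb), div_sub_div _ _ (by positivity) (by positivity),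
      div_eq_div_iff (by positivity) (by positivity)]
    ring
  rw [hlhs, div_le_div_iff₀ (by positivity) (by positivity)]
  have hkey := key_poly (N-x+1) N (by linarith) (by linarith)
  nlinarith [mul_le_mul_of_nonneg_left hkey (show (0:ℝ) ≤ (x-1)*N^2 by apply mul_nonneg (by linarith) (by positivity))]

/-- For `7 ≤ p ≤ n` and `θ := (p-1)/n`,
`Σ_{j=1}^{p-1} [1/(n-j)² - 1/n²] ≤ (9/2) θ²/(n(1-θ))`. -/
theorem sum_inverse_squares_bound (p n : ℕ) (hp : 7 ≤ p) (hpn : p ≤ n) :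
    ∑ j ∈ Finset.Icc 1 (p - 1), (1 / ((n:ℝ) - (j:ℝ)) ^ 2 - 1 / (n:ℝ) ^ 2)
      ≤ (9/2 : ℝ) * (((p:ℝ) - 1)/n) ^ 2 / ((n:ℝ) * (1 - ((p:ℝ) - 1)/n)) := by
  have hp1 : 1 ≤ p := by omega
  have hxcast : ((p - 1 : ℕ) : ℝ) = (p:ℝ) - 1 := by
    push_cast [hp1]; ring
  have hx : (7:ℝ) ≤ (p:ℝ) := by exact_mod_cast hp
  have hxN : (p:ℝ) ≤ (n:ℝ) := by exact_mod_cast hpn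
  -- termwise bound
  have step1 : ∑ j ∈ Finset.Icc 1 (p - 1), (1 / ((n:ℝ) - (j:ℝ)) ^ 2 - 1 / (n:ℝ) ^ 2)
      ≤ ∑ j ∈ Finset.Icc 1 (p - 1),
        ((1/((n:ℝ) - (j:ℝ) - 1/2) - 1/((n:ℝ) - (j:ℝ) + 1/2)) - 1 / (n:ℝ) ^ 2) := by
    apply Finset.sum_le_sum
    intro j hj
    rw [Finset.mem_Icc] at hj
    have hj1 : (1:ℝ) ≤ (j:ℝ) := by exact_mod_cast hj.1
    have hjp : (j:ℝ) ≤ (p:ℝ) - 1 := by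
      have : (j:ℝ) ≤ ((p-1:ℕ):ℝ) := by exact_mod_cast hj.2
      linarith [hxcast ▸ this]
    have hy : (1:ℝ) ≤ (n:ℝ) - (j:ℝ) := by linarith
    have h1 : (0:ℝ) < (n:ℝ) - (j:ℝ) - 1/2 := by linarith
    have h2 : (0:ℝ) < (n:ℝ) - (j:ℝ) + 1/2 := by linarith
    have heq : 1/((n:ℝ) - (j:ℝ) - 1/2) - 1/((n:ℝ) - (j:ℝ) + 1/2)
        = 1/(((n:ℝ) - (j:ℝ))^2 - 1/4) := by
      rw [div_sub_div _ _ (ne_of_gt h1) (ne_of_gt h2)]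
      congr 1
      · ring
      · ring
    rw [heq]
    have hpos : (0:ℝ) < ((n:ℝ) - (j:ℝ))^2 - 1/4 := by nlinarith
    have : ((n:ℝ) - (j:ℝ))^2 - 1/4 ≤ ((n:ℝ) - (j:ℝ))^2 := by linarith
    have hle := one_div_le_one_div_of_le hpos this
    linarith
  -- evaluate the telescoping sum
  have card_eq : (Finset.Icc 1 (p - 1)).card = p - 1 := by
    rw [Nat.card_Icc]
    omega
  have htel : ∑ j ∈ Finset.Icc 1 (p - 1),
      (1/((n:ℝ) - (j:ℝ) - 1/2) - 1/((n:ℝ) - (j:ℝ) + 1/2))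
      = 1/((n:ℝ) - ((p:ℝ)-1) - 1/2) - 1/((n:ℝ) - 1/2) := by
    have hIcc : Finset.Icc 1 (p-1) = Finset.Ico 1 p := by
      rw [← Finset.Ico_add_one_right_eq_Icc]
      congr 1
      omega
    rw [hIcc, Finset.sum_Ico_eq_sum_range]
    have hrange : p - 1 = p - 1 := rfl
    have h := Finset.sum_range_sub (f := fun i : ℕ => 1/((n:ℝ) - (i:ℝ) - 1/2)) (n := p - 1)
    have heq : ∀ i ∈ Finset.range (p-1),
        (1/((n:ℝ) - ((1+i:ℕ):ℝ) - 1/2) - 1/((n:ℝ) - ((1+i:ℕ):ℝ) + 1/2))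
        = (1/((n:ℝ) - ((i+1:ℕ):ℝ) - 1/2) - 1/((n:ℝ) - (i:ℝ) - 1/2)) := by
      intro i _
      push_cast
      ring_nf
    rw [Finset.sum_congr rfl heq, h]
    rw [hxcast]
    norm_num
  have split : ∑ j ∈ Finset.Icc 1 (p - 1),
      ((1/((n:ℝ) - (j:ℝ) - 1/2) - 1/((n:ℝ) - (j:ℝ) + 1/2)) - 1 / (n:ℝ) ^ 2)
      = (1/((n:ℝ) - ((p:ℝ)-1) - 1/2) - 1/((n:ℝ) - 1/2)) - ((p:ℝ)-1) / (n:ℝ)^2 := by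
    rw [Finset.sum_sub_distrib, htel, Finset.sum_const, card_eq]
    rw [nsmul_eq_mul, hxcast]
    ring
  rw [split] at step1
  calc ∑ j ∈ Finset.Icc 1 (p - 1), (1 / ((n:ℝ) - (j:ℝ)) ^ 2 - 1 / (n:ℝ) ^ 2)
      ≤ (1/((n:ℝ) - ((p:ℝ)-1) - 1/2) - 1/((n:ℝ) - 1/2)) - ((p:ℝ)-1) / (n:ℝ)^2 := step1
    _ ≤ (9/2 : ℝ) * (((p:ℝ) - 1)/n) ^ 2 / ((n:ℝ) * (1 - ((p:ℝ) - 1)/n)) := by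
        have := final_ineq (p:ℝ) (n:ℝ) hx hxN
        have harg : (n:ℝ) - ((p:ℝ)-1) - 1/2 = (n:ℝ) - (p:ℝ) + 1/2 := by ring
        rw [harg]
        exact this
end

section
/- Let X, X', Y, Y' be independent real-valued random variables. Then the Kolmogorov-Smirnov distance satisfies d_KS(X+Y, X'+Y') ≤ d_KS(X, X') + d_KS(Y, Y'). -/
/-!
Conditioning on the common summand: if `B` is independent of `A` and of `A'`, then
`P(A + B ≤ s) - P(A' + B ≤ s) = ∫ (F_A (s - y) - F_{A'} (s - y)) dP_B(y)`, which is at most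
`d_KS(A, A')` in absolute value. Replacing one summand at a time and using the triangle
inequality for `d_KS` gives the theorem.
-/

open MeasureTheory ProbabilityTheory

noncomputable def dKS {Ω : Type*} [MeasureSpace Ω] (A B : Ω → ℝ) : ℝ :=
  ⨆ s : ℝ, |(ℙ {ω | A ω ≤ s}).toReal - (ℙ {ω | B ω ≤ s}).toReal|

open Set

lemma measure_conv_Iic (μ ν : Measure ℝ) [SFinite μ] [SFinite ν] (s : ℝ) :
    (μ ∗ ν) (Iic s) = ∫⁻ y, μ (Iic (s - y)) ∂ν := by
  rw [Measure.conv, Measure.map_apply measurable_add measurableSet_Iic,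
    Measure.prod_apply_symm (measurable_add measurableSet_Iic)]
  congr with y
  congr with x
  simp [le_sub_iff_add_le]

lemma integrable_cdf_sub (μ ν : Measure ℝ) [IsFiniteMeasure ν] (s : ℝ) :
    Integrable (fun y ↦ cdf μ (s - y)) ν := by
  have hmeas : Measurable fun y ↦ cdf μ (s - y) :=
    (cdf μ).mono.measurable.comp (measurable_const.sub measurable_id)
  refine .of_bound hmeas.aestronglyMeasurable 1 (ae_of_all _ fun y ↦ ?_)
  rw [Real.norm_of_nonneg (cdf_nonneg μ _)]
  exact cdf_le_one μ _

lemma cdf_conv (μ ν : Measure ℝ) [IsProbabilityMeasure μ] [IsProbabilityMeasure ν] (s : ℝ) :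
    cdf (μ ∗ ν) s = ∫ y, cdf μ (s - y) ∂ν := by
  rw [cdf_eq_real, measureReal_def, measure_conv_Iic]
  simp_rw [← ofReal_cdf]
  rw [← ofReal_integral_eq_lintegral_ofReal (integrable_cdf_sub μ ν s)
      (ae_of_all _ fun _ ↦ cdf_nonneg μ _),
    ENNReal.toReal_ofReal (integral_nonneg fun _ ↦ cdf_nonneg μ _)]

lemma abs_cdf_conv_sub_cdf_conv_le (μ μ' ν : Measure ℝ) [IsProbabilityMeasure μ]
    [IsProbabilityMeasure μ'] [IsProbabilityMeasure ν] {C : ℝ}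
    (hC : ∀ x, |cdf μ x - cdf μ' x| ≤ C) (s : ℝ) :
    |cdf (μ ∗ ν) s - cdf (μ' ∗ ν) s| ≤ C := by
  rw [cdf_conv, cdf_conv, ← integral_sub (integrable_cdf_sub μ ν s) (integrable_cdf_sub μ' ν s)]
  simpa using norm_integral_le_of_norm_le_const (μ := ν)
    (f := fun y ↦ cdf μ (s - y) - cdf μ' (s - y)) (ae_of_all _ fun y ↦ hC (s - y))

section dKS

variable {Ω : Type*} [MeasureSpace Ω] [IsProbabilityMeasure (ℙ : Measure Ω)]

lemma toReal_prob_le_eq_cdf_map {A : Ω → ℝ} (hA : AEMeasurable A) (s : ℝ) :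
    (ℙ {ω | A ω ≤ s}).toReal = cdf (Measure.map A ℙ) s := by
  have := Measure.isProbabilityMeasure_map (μ := ℙ) hA
  rw [cdf_eq_real, measureReal_def, Measure.map_apply_of_aemeasurable hA measurableSet_Iic]
  rfl

lemma bddAbove_range_abs_sub_prob_le (A B : Ω → ℝ) :
    BddAbove (range fun s : ℝ ↦ |(ℙ {ω | A ω ≤ s}).toReal - (ℙ {ω | B ω ≤ s}).toReal|) :=
  ⟨1, by
    rintro _ ⟨s, rfl⟩
    exact abs_sub_le_of_nonneg_of_le ENNReal.toReal_nonneg measureReal_le_one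
      ENNReal.toReal_nonneg measureReal_le_one⟩

lemma abs_sub_prob_le_le_dKS (A B : Ω → ℝ) (s : ℝ) :
    |(ℙ {ω | A ω ≤ s}).toReal - (ℙ {ω | B ω ≤ s}).toReal| ≤ dKS A B :=
  le_ciSup (bddAbove_range_abs_sub_prob_le A B) s

lemma dKS_triangle (A B C : Ω → ℝ) : dKS A C ≤ dKS A B + dKS B C :=
  ciSup_le fun s ↦ (abs_sub_le _ _ _).trans <|
    add_le_add (abs_sub_prob_le_le_dKS A B s) (abs_sub_prob_le_le_dKS B C s)

lemma dKS_add_right_le {A A' B : Ω → ℝ} (hA : AEMeasurable A) (hA' : AEMeasurable A')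
    (hB : AEMeasurable B) (hAB : IndepFun A B ℙ) (hA'B : IndepFun A' B ℙ) :
    dKS (fun ω ↦ A ω + B ω) (fun ω ↦ A' ω + B ω) ≤ dKS A A' := by
  have := Measure.isProbabilityMeasure_map (μ := ℙ) hA
  have := Measure.isProbabilityMeasure_map (μ := ℙ) hA'
  have := Measure.isProbabilityMeasure_map (μ := ℙ) hB
  have hdist (x : ℝ) : |cdf (Measure.map A ℙ) x - cdf (Measure.map A' ℙ) x| ≤ dKS A A' := by
    rw [← toReal_prob_le_eq_cdf_map hA, ← toReal_prob_le_eq_cdf_map hA']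
    exact abs_sub_prob_le_le_dKS A A' x
  refine ciSup_le fun s ↦ ?_
  change |(ℙ {ω | (A + B) ω ≤ s}).toReal - (ℙ {ω | (A' + B) ω ≤ s}).toReal| ≤ _
  rw [toReal_prob_le_eq_cdf_map (hA.add hB), toReal_prob_le_eq_cdf_map (hA'.add hB),
    hAB.map_add_eq_map_conv_map₀ hA hB, hA'B.map_add_eq_map_conv_map₀ hA' hB]
  exact abs_cdf_conv_sub_cdf_conv_le _ _ _ hdist s

lemma dKS_add_left_le {A A' B : Ω → ℝ} (hA : AEMeasurable A) (hA' : AEMeasurable A')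
    (hB : AEMeasurable B) (hBA : IndepFun B A ℙ) (hBA' : IndepFun B A' ℙ) :
    dKS (fun ω ↦ B ω + A ω) (fun ω ↦ B ω + A' ω) ≤ dKS A A' := by
  simpa only [add_comm] using dKS_add_right_le hA hA' hB hBA.symm hBA'.symm

end dKS

/-- Parallelogram inequality for the Kolmogorov–Smirnov distance:
if `X, X', Y, Y'` are (mutually) independent, then
`d_KS(X+Y, X'+Y') ≤ d_KS(X,X') + d_KS(Y,Y')`. -/
theorem dKS_add_le {Ω : Type*} [MeasureSpace Ω] [IsProbabilityMeasure (ℙ : Measure Ω)]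
    (X X' Y Y' : Ω → ℝ) (hX : Measurable X) (hX' : Measurable X')
    (hY : Measurable Y) (hY' : Measurable Y')
    (hindep : iIndepFun ![X, X', Y, Y'] ℙ) :
    dKS (fun ω => X ω + Y ω) (fun ω => X' ω + Y' ω) ≤ dKS X X' + dKS Y Y' := by
  have hXY : IndepFun X Y ℙ := by simpa using hindep.indepFun (show (0 : Fin 4) ≠ 2 by decide)
  have hX'Y : IndepFun X' Y ℙ := by simpa using hindep.indepFun (show (1 : Fin 4) ≠ 2 by decide)
  have hX'Y' : IndepFun X' Y' ℙ := by simpa using hindep.indepFun (show (1 : Fin 4) ≠ 3 by decide)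
  calc dKS (fun ω => X ω + Y ω) (fun ω => X' ω + Y' ω)
      ≤ dKS (fun ω => X ω + Y ω) (fun ω => X' ω + Y ω)
        + dKS (fun ω => X' ω + Y ω) (fun ω => X' ω + Y' ω) := dKS_triangle _ _ _
    _ ≤ dKS X X' + dKS Y Y' :=
        add_le_add (dKS_add_right_le hX.aemeasurable hX'.aemeasurable hY.aemeasurable hXY hX'Y)
          (dKS_add_left_le hY.aemeasurable hY'.aemeasurable hX'.aemeasurable hX'Y hX'Y')
end

section
/- Let X, Y be independent real random variables, and let N, N' be independent standard Gaussian random variables. Then for real numbers σ, τ not both zero, d_KS((σX + τY)/√(σ²+τ²), N) ≤ d_KS(X, N) + d_KS(Y, N). -/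
open MeasureTheory ProbabilityTheory

/-- The Kolmogorov–Smirnov distance between a random variable and a standard Gaussian. -/
noncomputable def dKSN {Ω : Type*} [MeasureSpace Ω] (A : Ω → ℝ) : ℝ :=
  ⨆ s : ℝ, |(ℙ {ω | A ω ≤ s}).toReal - ((gaussianReal 0 1) (Set.Iic s)).toReal|

/-!
The law of `(σX + τY)/c`, `c = √(σ² + τ²)`, is the image under `x ↦ c⁻¹x` of the convolution
of the laws of `σX` and `τY`; by `σN + τN' ∼ cN` the standard Gaussian is the same image of the
corresponding Gaussian convolution. The Kolmogorov–Smirnov distance does not increase under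
`x ↦ ax` (for `a < 0` through the left limits of the distribution functions), and it is
subadditive under convolution because
`(ρ ∗ μ)(-∞, s] = ∫ μ(-∞, s - x] dρ(x)` averages the differences of the distribution functions.
-/

open Set Filter Topology

section Convolution

variable (ρ ν : Measure ℝ)

lemma antitone_measure_Iic_sub (s : ℝ) : Antitone fun x => ν (Iic (s - x)) :=
  fun _ _ hxy => measure_mono (Iic_subset_Iic.2 (sub_le_sub_left hxy s))

lemma conv_apply_Iic [SFinite ν] (s : ℝ) : (ρ ∗ ν) (Iic s) = ∫⁻ x, ν (Iic (s - x)) ∂ρ := by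
  rw [Measure.conv, Measure.map_apply measurable_add measurableSet_Iic,
    Measure.prod_apply (measurable_add measurableSet_Iic)]
  congr with x
  congr with y
  simp [le_sub_iff_add_le']

lemma measureReal_conv_Iic [IsFiniteMeasure ν] (s : ℝ) :
    (ρ ∗ ν).real (Iic s) = ∫ x, ν.real (Iic (s - x)) ∂ρ := by
  rw [measureReal_def, conv_apply_Iic]
  exact (integral_toReal (antitone_measure_Iic_sub ν s).measurable.aemeasurable
    (ae_of_all _ fun _ => measure_lt_top _ _)).symm

lemma integrable_measureReal_Iic_sub [IsFiniteMeasure ρ] [IsFiniteMeasure ν] (s : ℝ) :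
    Integrable (fun x => ν.real (Iic (s - x))) ρ :=
  .of_bound (antitone_measure_Iic_sub ν s).measurable.ennreal_toReal.aestronglyMeasurable
    (ν.real univ) <| ae_of_all _ fun _ => by
      rw [Real.norm_eq_abs, abs_of_nonneg measureReal_nonneg]
      exact measureReal_mono (subset_univ _)

end Convolution

noncomputable def ksDist (μ ν : Measure ℝ) : ℝ :=
  ⨆ s : ℝ, |μ.real (Iic s) - ν.real (Iic s)|

section KolmogorovSmirnov

variable {μ ν ρ : Measure ℝ}

lemma ksDist_nonneg : 0 ≤ ksDist μ ν :=
  Real.iSup_nonneg fun _ => abs_nonneg _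

lemma ksDist_le {D : ℝ} (h : ∀ s, |μ.real (Iic s) - ν.real (Iic s)| ≤ D) : ksDist μ ν ≤ D :=
  ciSup_le h

variable [IsProbabilityMeasure μ] [IsProbabilityMeasure ν] [IsProbabilityMeasure ρ]

lemma abs_measureReal_sub_measureReal_le_one (s t : Set ℝ) : |μ.real s - ν.real t| ≤ 1 :=
  abs_sub_le_of_nonneg_of_le measureReal_nonneg measureReal_le_one
    measureReal_nonneg measureReal_le_one

lemma abs_measureReal_Iic_sub_le_ksDist (s : ℝ) :
    |μ.real (Iic s) - ν.real (Iic s)| ≤ ksDist μ ν :=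
  le_ciSup (f := fun t => |μ.real (Iic t) - ν.real (Iic t)|)
    ⟨1, by rintro _ ⟨t, rfl⟩; exact abs_measureReal_sub_measureReal_le_one _ _⟩ s

lemma ksDist_triangle : ksDist μ ρ ≤ ksDist μ ν + ksDist ν ρ :=
  ksDist_le fun s => (abs_sub_le _ (ν.real (Iic s)) _).trans
    (add_le_add (abs_measureReal_Iic_sub_le_ksDist s) (abs_measureReal_Iic_sub_le_ksDist s))

lemma abs_measureReal_Iio_sub_le_ksDist (s : ℝ) :
    |μ.real (Iio s) - ν.real (Iio s)| ≤ ksDist μ ν := by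
  obtain ⟨u, hu_mono, hu_lt, hu_lim⟩ := exists_seq_strictMono_tendsto s
  have hunion : ⋃ n, Iic (u n) = Iio s := iUnion_Iic_eq_Iio_of_lt_of_tendsto hu_lt hu_lim
  have hmono : Monotone fun n => Iic (u n) := fun i j hij => Iic_subset_Iic.2 (hu_mono.monotone hij)
  have cdf_tendsto : ∀ (η : Measure ℝ) [IsProbabilityMeasure η],
      Tendsto (fun n => η.real (Iic (u n))) atTop (𝓝 (η.real (Iio s))) := fun η _ => by
    rw [← hunion]
    exact (ENNReal.tendsto_toReal (measure_ne_top _ _)).comp (tendsto_measure_iUnion_atTop hmono)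
  exact le_of_tendsto (((cdf_tendsto μ).sub (cdf_tendsto ν)).abs)
    (Eventually.of_forall fun n => abs_measureReal_Iic_sub_le_ksDist (u n))

lemma ksDist_map_const_mul_le (a : ℝ) : ksDist (μ.map (a * ·)) (ν.map (a * ·)) ≤ ksDist μ ν := by
  refine ksDist_le fun s => ?_
  simp only [map_measureReal_apply (measurable_const_mul a) measurableSet_Iic]
  rcases lt_trichotomy a 0 with ha | rfl | ha
  · have hpre : (a * ·) ⁻¹' Iic s = (Iio (s / a))ᶜ := by
      ext x; simp [div_le_iff_of_neg ha, mul_comm]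
    rw [hpre, measureReal_compl measurableSet_Iio, measureReal_compl measurableSet_Iio,
      probReal_univ, probReal_univ, sub_sub_sub_cancel_left, abs_sub_comm]
    exact abs_measureReal_Iio_sub_le_ksDist _
  · by_cases hs : 0 ≤ s <;> simp [preimage, hs, ksDist_nonneg]
  · have hpre : (a * ·) ⁻¹' Iic s = Iic (s / a) := by
      ext x; simp [le_div_iff₀ ha, mul_comm]
    rw [hpre]
    exact abs_measureReal_Iic_sub_le_ksDist _

lemma ksDist_conv_left_le : ksDist (ρ ∗ μ) (ρ ∗ ν) ≤ ksDist μ ν := by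
  refine ksDist_le fun s => ?_
  rw [measureReal_conv_Iic, measureReal_conv_Iic,
    ← integral_sub (integrable_measureReal_Iic_sub ρ μ s) (integrable_measureReal_Iic_sub ρ ν s),
    ← Real.norm_eq_abs]
  simpa using norm_integral_le_of_norm_le_const (μ := ρ)
    (f := fun x => μ.real (Iic (s - x)) - ν.real (Iic (s - x))) <| ae_of_all _ fun x =>
      abs_measureReal_Iic_sub_le_ksDist (s - x)

end KolmogorovSmirnov

lemma ksDist_conv_le (μ₁ μ₂ ν₁ ν₂ : Measure ℝ) [IsProbabilityMeasure μ₁]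
    [IsProbabilityMeasure μ₂] [IsProbabilityMeasure ν₁] [IsProbabilityMeasure ν₂] :
    ksDist (μ₁ ∗ μ₂) (ν₁ ∗ ν₂) ≤ ksDist μ₁ ν₁ + ksDist μ₂ ν₂ := by
  have h₁ : ksDist (μ₁ ∗ ν₂) (ν₁ ∗ ν₂) ≤ ksDist μ₁ ν₁ := by
    rw [Measure.conv_comm μ₁, Measure.conv_comm ν₁]
    exact ksDist_conv_left_le
  calc ksDist (μ₁ ∗ μ₂) (ν₁ ∗ ν₂)
      ≤ ksDist (μ₁ ∗ μ₂) (μ₁ ∗ ν₂) + ksDist (μ₁ ∗ ν₂) (ν₁ ∗ ν₂) := ksDist_triangle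
    _ ≤ ksDist μ₂ ν₂ + ksDist μ₁ ν₁ := add_le_add ksDist_conv_left_le h₁
    _ = ksDist μ₁ ν₁ + ksDist μ₂ ν₂ := add_comm _ _

instance isProbabilityMeasure_map_const_mul (μ : Measure ℝ) [IsProbabilityMeasure μ] (a : ℝ) :
    IsProbabilityMeasure (μ.map (a * ·)) :=
  Measure.isProbabilityMeasure_map (measurable_const_mul a).aemeasurable

lemma gaussianReal_map_const_mul_conv (σ τ : ℝ) :
    (gaussianReal 0 1).map (σ * ·) ∗ (gaussianReal 0 1).map (τ * ·)
      = (gaussianReal 0 1).map (√(σ ^ 2 + τ ^ 2) * ·) := by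
  simp only [gaussianReal_map_const_mul, gaussianReal_conv_gaussianReal, mul_zero, add_zero,
    mul_one]
  congr
  ext
  simp [Real.sq_sqrt (by positivity : 0 ≤ σ ^ 2 + τ ^ 2)]

lemma ProbabilityTheory.IndepFun.map_const_mul_add_const_mul {Ω : Type*} [MeasurableSpace Ω]
    {P : Measure Ω} [IsFiniteMeasure P] {X Y : Ω → ℝ} (hX : Measurable X) (hY : Measurable Y)
    (hXY : IndepFun X Y P) (σ τ : ℝ) :
    P.map (fun ω => σ * X ω + τ * Y ω) = (P.map X).map (σ * ·) ∗ (P.map Y).map (τ * ·) := by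
  rw [Measure.map_map (measurable_const_mul σ) hX, Measure.map_map (measurable_const_mul τ) hY]
  exact (hXY.comp (measurable_const_mul σ) (measurable_const_mul τ)).map_add_eq_map_conv_map
    ((measurable_const_mul σ).comp hX) ((measurable_const_mul τ).comp hY)

lemma dKSN_eq_ksDist {Ω : Type*} [MeasureSpace Ω] {A : Ω → ℝ} (hA : Measurable A) :
    dKSN A = ksDist ((ℙ : Measure Ω).map A) (gaussianReal 0 1) := by
  simp only [dKSN, ksDist, map_measureReal_apply hA measurableSet_Iic]
  rfl

/-- For independent `X, Y` and reals `σ, τ` not both zero,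
`d_KS((σX + τY)/√(σ²+τ²), N) ≤ d_KS(X, N) + d_KS(Y, N)` where `N` is standard Gaussian. -/
theorem dKSN_combination_le {Ω : Type*} [MeasureSpace Ω]
    [IsProbabilityMeasure (ℙ : Measure Ω)]
    (X Y : Ω → ℝ) (hX : Measurable X) (hY : Measurable Y)
    (hindep : IndepFun X Y ℙ) (σ τ : ℝ) (hστ : σ ≠ 0 ∨ τ ≠ 0) :
    dKSN (fun ω => (σ * X ω + τ * Y ω) / Real.sqrt (σ ^ 2 + τ ^ 2))
      ≤ dKSN X + dKSN Y := by
  have hc : √(σ ^ 2 + τ ^ 2) ≠ 0 := by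
    refine Real.sqrt_ne_zero'.2 ?_
    rcases hστ with h | h <;> positivity
  have := Measure.isProbabilityMeasure_map (μ := ℙ) hX.aemeasurable
  have := Measure.isProbabilityMeasure_map (μ := ℙ) hY.aemeasurable
  have hlaw : (ℙ : Measure Ω).map (fun ω => (σ * X ω + τ * Y ω) / √(σ ^ 2 + τ ^ 2))
      = (((ℙ : Measure Ω).map X).map (σ * ·) ∗ ((ℙ : Measure Ω).map Y).map (τ * ·)).map
          ((√(σ ^ 2 + τ ^ 2))⁻¹ * ·) := by
    rw [← hindep.map_const_mul_add_const_mul hX hY, Measure.map_map (measurable_const_mul _)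
      (by fun_prop)]
    simp only [Function.comp_def, div_eq_inv_mul]
  have hγ : gaussianReal 0 1
      = ((gaussianReal 0 1).map (σ * ·) ∗ (gaussianReal 0 1).map (τ * ·)).map
          ((√(σ ^ 2 + τ ^ 2))⁻¹ * ·) := by
    rw [gaussianReal_map_const_mul_conv, Measure.map_map (measurable_const_mul _)
      (measurable_const_mul _)]
    simp [Function.comp_def, ← mul_assoc, inv_mul_cancel₀ hc]
  rw [dKSN_eq_ksDist hX, dKSN_eq_ksDist hY, dKSN_eq_ksDist (by fun_prop), hlaw]
  conv_lhs => rw [hγ]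
  exact (ksDist_map_const_mul_le _).trans <| (ksDist_conv_le ..).trans <|
    add_le_add (ksDist_map_const_mul_le σ) (ksDist_map_const_mul_le τ)
end

section
/- Let σ, τ > 0. The Kolmogorov-Smirnov distance between a centered Gaussian with variance σ² and a centered Gaussian with variance τ² is at most (3/8)·|σ² - τ²|/min{σ², τ²}. -/
/-!
Rescaling reduces both distribution functions to the standard normal one `Φ`: for `σ ≤ τ` and
`x = t / τ`, the difference is `Φ (k x) - Φ x` with `k = τ / σ ≥ 1`. The density is largest at
the end `x` of the interval between `x` and `k x`, so this difference is at most
`(k - 1) · |x| φ(x) ≤ (k - 1) / √(2π)`, and `k - 1 ≤ (k² - 1) / 2`.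
-/

open MeasureTheory ProbabilityTheory Real Set intervalIntegral
open scoped NNReal

lemma inv_sqrt_two_pi_le : (√(2 * π))⁻¹ ≤ 3 / 4 := by
  have h : 4 / 3 ≤ √(2 * π) := le_sqrt_of_sq_le (by nlinarith [pi_gt_three])
  rw [inv_le_comm₀ (by positivity) (by norm_num)]
  linarith

lemma sq_le_sq_of_mem_uIcc_mul {k x y : ℝ} (hk : 1 ≤ k) (hy : y ∈ uIcc x (k * x)) :
    x ^ 2 ≤ y ^ 2 := by
  rcases le_total 0 x with hx | hx
  · rw [uIcc_of_le (by nlinarith)] at hy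
    nlinarith [hy.1]
  · rw [uIcc_of_ge (by nlinarith)] at hy
    nlinarith [hy.2]

namespace ProbabilityTheory

lemma gaussianReal_real_Iic_eq_cdf_div {σ : ℝ} (hσ : 0 < σ) (t : ℝ) :
    (gaussianReal 0 (σ ^ 2).toNNReal).real (Iic t) = cdf (gaussianReal 0 1) (t / σ) := by
  have hmap : (gaussianReal 0 1).map (σ * ·) = gaussianReal 0 (σ ^ 2).toNNReal := by
    rw [gaussianReal_map_const_mul, mul_zero, mul_one]
    congr
    exact (max_eq_left (sq_nonneg σ)).symm
  rw [cdf_eq_real, ← hmap, map_measureReal_apply (by fun_prop) measurableSet_Iic,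
    preimage_const_mul_Iic₀ _ hσ]

lemma cdf_gaussianReal_sub_cdf (μ : ℝ) {v : ℝ≥0} (hv : v ≠ 0) (a b : ℝ) :
    cdf (gaussianReal μ v) b - cdf (gaussianReal μ v) a = ∫ x in a..b, gaussianPDFReal μ v x := by
  wlog hab : a ≤ b generalizing a b
  · rw [integral_symm, ← this b a (le_of_not_ge hab), neg_sub]
  have h := (cdf (gaussianReal μ v)).measure_Ioc a b
  rw [measure_cdf, gaussianReal_apply_eq_integral μ hv, ← integral_of_le hab] at h
  exact (ENNReal.ofReal_eq_ofReal_iff (sub_nonneg.2 (monotone_cdf _ hab))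
    (integral_nonneg hab fun x _ => gaussianPDFReal_nonneg μ v x)).1 h.symm

lemma gaussianPDFReal_le_of_sq_le (μ : ℝ) (v : ℝ≥0) {x y : ℝ}
    (h : (x - μ) ^ 2 ≤ (y - μ) ^ 2) : gaussianPDFReal μ v y ≤ gaussianPDFReal μ v x := by
  simp only [gaussianPDFReal]
  gcongr

lemma abs_mul_gaussianPDFReal_le (x : ℝ) : |x| * gaussianPDFReal 0 1 x ≤ (√(2 * π))⁻¹ := by
  have hx : |x| ≤ exp (x ^ 2 / 2) := by
    nlinarith [add_one_le_exp (x ^ 2 / 2), sq_abs x, sq_nonneg (|x| - 1)]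
  have hexp : |x| * exp (-x ^ 2 / 2) ≤ 1 := by
    rw [neg_div, exp_neg, ← div_eq_mul_inv, div_le_one (exp_pos _)]
    exact hx
  simp only [gaussianPDFReal, NNReal.coe_one, mul_one, sub_zero]
  calc |x| * ((√(2 * π))⁻¹ * exp (-x ^ 2 / 2)) = (√(2 * π))⁻¹ * (|x| * exp (-x ^ 2 / 2)) := by
        ring
    _ ≤ (√(2 * π))⁻¹ := mul_le_of_le_one_right (by positivity) hexp

lemma abs_cdf_gaussianReal_mul_sub_le {k : ℝ} (hk : 1 ≤ k) (x : ℝ) :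
    |cdf (gaussianReal 0 1) (k * x) - cdf (gaussianReal 0 1) x| ≤ (k - 1) * (√(2 * π))⁻¹ := by
  have hpdf : ∀ y ∈ uIoc x (k * x), ‖gaussianPDFReal 0 1 y‖ ≤ gaussianPDFReal 0 1 x := by
    intro y hy
    rw [norm_of_nonneg (gaussianPDFReal_nonneg _ _ _)]
    apply gaussianPDFReal_le_of_sq_le
    simpa using sq_le_sq_of_mem_uIcc_mul hk (uIoc_subset_uIcc hy)
  rw [cdf_gaussianReal_sub_cdf 0 one_ne_zero, ← Real.norm_eq_abs]
  calc ‖∫ y in x..k * x, gaussianPDFReal 0 1 y‖ ≤ gaussianPDFReal 0 1 x * |k * x - x| :=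
        norm_integral_le_of_norm_le_const hpdf
    _ = (k - 1) * (|x| * gaussianPDFReal 0 1 x) := by
        rw [← sub_one_mul, abs_mul, abs_of_nonneg (by linarith)]
        ring
    _ ≤ (k - 1) * (√(2 * π))⁻¹ := by
        gcongr
        exact abs_mul_gaussianPDFReal_le x

lemma abs_gaussianReal_real_Iic_sub_le {σ τ : ℝ} (hσ : 0 < σ) (hστ : σ ≤ τ) (t : ℝ) :
    |(gaussianReal 0 (σ ^ 2).toNNReal).real (Iic t)
        - (gaussianReal 0 (τ ^ 2).toNNReal).real (Iic t)|
      ≤ 3 / 8 * (τ ^ 2 - σ ^ 2) / σ ^ 2 := by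
  have hτ : 0 < τ := hσ.trans_le hστ
  have hk : 1 ≤ τ / σ := (one_le_div hσ).2 hστ
  have hscale : t / σ = τ / σ * (t / τ) := by field_simp
  rw [gaussianReal_real_Iic_eq_cdf_div hσ, gaussianReal_real_Iic_eq_cdf_div hτ, hscale]
  calc _ ≤ (τ / σ - 1) * (√(2 * π))⁻¹ := abs_cdf_gaussianReal_mul_sub_le hk _
    _ ≤ (τ / σ - 1) * (3 / 4) := by
        gcongr
        exact inv_sqrt_two_pi_le
    _ ≤ 3 / 8 * (τ ^ 2 - σ ^ 2) / σ ^ 2 := by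
        rw [div_sub_one hσ.ne', div_mul_eq_mul_div, div_le_div_iff₀ hσ (by positivity)]
        nlinarith [mul_nonneg (sub_nonneg.2 hστ) hσ.le]

end ProbabilityTheory

/-- The Kolmogorov–Smirnov distance between two centered Gaussians with variances
`σ²` and `τ²` is at most `(3/8)·|σ² - τ²|/min{σ², τ²}`. -/
theorem dKS_gaussian_variances (σ τ : ℝ) (hσ : 0 < σ) (hτ : 0 < τ) :
    (⨆ t : ℝ, |((gaussianReal 0 (σ ^ 2).toNNReal) (Set.Iic t)).toReal
        - ((gaussianReal 0 (τ ^ 2).toNNReal) (Set.Iic t)).toReal|)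
      ≤ (3/8 : ℝ) * |σ ^ 2 - τ ^ 2| / min (σ ^ 2) (τ ^ 2) := by
  refine ciSup_le fun t => ?_
  wlog hστ : σ ≤ τ generalizing σ τ
  · rw [abs_sub_comm, abs_sub_comm (σ ^ 2), min_comm]
    exact this τ σ hτ hσ (le_of_not_ge hστ)
  have hsq : σ ^ 2 ≤ τ ^ 2 := by gcongr
  rw [min_eq_left hsq, abs_of_nonpos (sub_nonpos.2 hsq), neg_sub]
  exact abs_gaussianReal_real_Iic_sub_le hσ hστ t
end

section
/- Let c_0' := ∫_0^∞ (1/2 - 1/ζ + 1/(e^ζ - 1)) · 1/(e^{ζ/2} - 1) dζ and for j ≥ 1 let p_j := ∫_0^∞ (1/2 - 1/ζ + 1/(e^ζ - 1)) e^{-jζ/2} dζ. Then Σ_{j=1}^∞ p_j converges with value c_0', and there is a constant C > 0 such that |Σ_{j=n+1}^∞ p_j| ≤ C/n for all n ≥ 1. -/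
open MeasureTheory Real

/-- The Binet-type integrals `p_j := ∫₀^∞ (1/2 - 1/ζ + 1/(e^ζ-1)) e^{-jζ/2} dζ`. -/
noncomputable def binetP (j : ℕ) : ℝ :=
  ∫ ζ in Set.Ioi (0:ℝ), (1/2 - 1/ζ + 1/(Real.exp ζ - 1)) * Real.exp (-(j:ℝ) * ζ / 2)

/-- `c₀' := ∫₀^∞ (1/2 - 1/ζ + 1/(e^ζ-1)) · 1/(e^{ζ/2}-1) dζ`. -/
noncomputable def binetC : ℝ :=
  ∫ ζ in Set.Ioi (0:ℝ), (1/2 - 1/ζ + 1/(Real.exp ζ - 1)) * (1/(Real.exp (ζ/2) - 1))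

/-!
Write `f ζ := 1/2 - 1/ζ + 1/(e^ζ - 1)`. Taylor bounds on `e^ζ` give `|f ζ| ≤ ζ`, hence
`|p_m| ≤ ∫₀^∞ ζ e^{-mζ/2} dζ = 4/m²`. This makes `∑ⱼ ∫ |f ζ| e^{-jζ/2} dζ` finite, so sum and
integral may be interchanged, and the geometric series `∑_{j≥1} e^{-jζ/2} = 1/(e^{ζ/2} - 1)` yields
`c₀'`. The tail is then at most `4 ∑_{m>n} 1/m² ≤ 4/n`.
-/

open Set

noncomputable def binetFn (ζ : ℝ) : ℝ := 1/2 - 1/ζ + 1/(exp ζ - 1)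

@[fun_prop]
lemma measurable_binetFn : Measurable binetFn := by
  unfold binetFn
  fun_prop

lemma binetFn_le {ζ : ℝ} (hζ : 0 < ζ) : binetFn ζ ≤ ζ := by
  have hE : ζ * (1 + ζ / 2) ≤ exp ζ - 1 := by nlinarith [quadratic_le_exp_of_nonneg hζ.le]
  have hinv : 1 / (exp ζ - 1) ≤ 1 / (ζ * (1 + ζ / 2)) :=
    one_div_le_one_div_of_le (by positivity) hE
  have hlin : 1/2 - 1/ζ + 1 / (ζ * (1 + ζ / 2)) = ζ / (2 * (2 + ζ)) := by
    field_simp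
    ring
  have hle : ζ / (2 * (2 + ζ)) ≤ ζ := div_le_self hζ.le (by linarith)
  unfold binetFn
  linarith

lemma exp_sub_one_le_of_le_one {x : ℝ} (h0 : 0 ≤ x) (h1 : x ≤ 1) :
    exp x - 1 ≤ x * (1 + (x / 2 + x ^ 2)) := by
  have h := exp_bound' h0 h1 (n := 3) (by norm_num)
  simp only [Finset.sum_range_succ, Finset.sum_range_zero, Nat.factorial] at h
  norm_num at h
  nlinarith [pow_nonneg h0 3]

lemma neg_le_binetFn {ζ : ℝ} (hζ : 0 < ζ) : -ζ ≤ binetFn ζ := by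
  unfold binetFn
  rcases le_or_gt ζ 1 with hle | hgt
  · set a := ζ / 2 + ζ ^ 2
    have hE := exp_sub_one_le_of_le_one hζ.le hle
    have hE0 : 0 < exp ζ - 1 := by linarith [add_one_lt_exp hζ.ne']
    -- `1/ζ - 1/2 - ζ = (1 - a)/ζ`, and `(1 - a)(1 + a) = 1 - a² ≤ 1`
    have hkey : 1/ζ - 1/2 - ζ ≤ 1 / (ζ * (1 + a)) := by
      have hsplit : 1/ζ - 1/2 - ζ = (1 - a) * (1 + a) / (ζ * (1 + a)) := by
        rw [mul_div_mul_right _ _ (by positivity : (1 + a) ≠ 0)]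
        field_simp
        ring
      rw [hsplit]
      exact div_le_div_of_nonneg_right (by nlinarith [sq_nonneg a]) (by positivity)
    have hinv : 1 / (ζ * (1 + a)) ≤ 1 / (exp ζ - 1) := one_div_le_one_div_of_le hE0 hE
    linarith
  · have h1 : 1 / ζ < 1 := (div_lt_one hζ).mpr hgt
    have h2 : 0 < 1 / (exp ζ - 1) := one_div_pos.mpr (by linarith [add_one_lt_exp hζ.ne'])
    linarith

lemma abs_binetFn_le {ζ : ℝ} (hζ : 0 < ζ) : |binetFn ζ| ≤ ζ :=
  abs_le.mpr ⟨neg_le_binetFn hζ, binetFn_le hζ⟩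

lemma integrableOn_id_mul_exp_neg_mul {c : ℝ} (hc : 0 < c) :
    IntegrableOn (fun ζ : ℝ => ζ * exp (-(c * ζ))) (Ioi 0) := by
  refine (integrableOn_rpow_mul_exp_neg_mul_rpow (p := 1) (s := 1) (b := c)
    (by norm_num) (by norm_num) hc).congr_fun (fun x _ => ?_) measurableSet_Ioi
  simp [rpow_one]

lemma integral_id_mul_exp_neg_mul {c : ℝ} (hc : 0 < c) :
    ∫ ζ in Ioi (0:ℝ), ζ * exp (-(c * ζ)) = (c ^ 2)⁻¹ := by
  have h := integral_rpow_mul_exp_neg_mul_Ioi (a := 2) (r := c) two_pos hc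
  norm_num [Gamma_two] at h
  exact h

lemma norm_binetFn_mul_exp_le {c ζ : ℝ} (hζ : ζ ∈ Ioi 0) :
    ‖binetFn ζ * exp (-(c * ζ))‖ ≤ ζ * exp (-(c * ζ)) := by
  rw [norm_mul, norm_of_nonneg (exp_pos _).le, Real.norm_eq_abs]
  exact mul_le_mul_of_nonneg_right (abs_binetFn_le hζ) (exp_pos _).le

lemma integrableOn_binetFn_mul_exp_neg_mul {c : ℝ} (hc : 0 < c) :
    IntegrableOn (fun ζ => binetFn ζ * exp (-(c * ζ))) (Ioi 0) :=
  (integrableOn_id_mul_exp_neg_mul hc).mono' (by fun_prop)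
    ((ae_restrict_iff' measurableSet_Ioi).mpr (.of_forall fun _ => norm_binetFn_mul_exp_le))

lemma integral_norm_binetFn_mul_exp_neg_mul_le {c : ℝ} (hc : 0 < c) :
    ∫ ζ in Ioi 0, ‖binetFn ζ * exp (-(c * ζ))‖ ≤ (c ^ 2)⁻¹ := by
  rw [← integral_id_mul_exp_neg_mul hc]
  exact setIntegral_mono_on (integrableOn_binetFn_mul_exp_neg_mul hc).norm
    (integrableOn_id_mul_exp_neg_mul hc) measurableSet_Ioi fun _ => norm_binetFn_mul_exp_le

lemma binetP_eq_integral (m : ℕ) :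
    binetP m = ∫ ζ in Ioi 0, binetFn ζ * exp (-((m / 2 : ℝ) * ζ)) := by
  unfold binetP binetFn
  congr with ζ
  ring_nf

lemma integral_norm_binetFn_mul_exp_neg_half_mul_le {m : ℕ} (hm : m ≠ 0) :
    ∫ ζ in Ioi 0, ‖binetFn ζ * exp (-((m / 2 : ℝ) * ζ))‖ ≤ 4 * ((m : ℝ) ^ 2)⁻¹ := by
  refine (integral_norm_binetFn_mul_exp_neg_mul_le (by positivity)).trans_eq ?_
  field_simp
  ring

lemma abs_binetP_le {m : ℕ} (hm : m ≠ 0) : |binetP m| ≤ 4 * ((m : ℝ) ^ 2)⁻¹ := by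
  rw [binetP_eq_integral, ← Real.norm_eq_abs]
  exact (norm_integral_le_integral_norm _).trans (integral_norm_binetFn_mul_exp_neg_half_mul_le hm)

lemma hasSum_exp_neg_half_mul_succ {ζ : ℝ} (hζ : 0 < ζ) :
    HasSum (fun j : ℕ => exp (-((((j + 1 : ℕ) : ℝ) / 2) * ζ))) (1 / (exp (ζ / 2) - 1)) := by
  have hr : exp (-(ζ / 2)) < 1 := exp_lt_one_iff.mpr (by linarith)
  have hterm (j : ℕ) :
      exp (-(ζ / 2)) ^ j * exp (-(ζ / 2)) = exp (-((((j + 1 : ℕ) : ℝ) / 2) * ζ)) := by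
    rw [← pow_succ, ← exp_nat_mul]
    push_cast
    ring_nf
  have hsum : (1 - exp (-(ζ / 2)))⁻¹ * exp (-(ζ / 2)) = 1 / (exp (ζ / 2) - 1) := by
    rw [exp_neg]
    field_simp
  simpa only [hterm, hsum] using
    (hasSum_geometric_of_lt_one (exp_pos _).le hr).mul_right (exp (-(ζ / 2)))

lemma tsum_inv_sq_nat_add_le {n : ℕ} (hn : n ≠ 0) :
    ∑' j : ℕ, (((n + 1 + j : ℕ) : ℝ) ^ 2)⁻¹ ≤ (n : ℝ)⁻¹ := by
  refine tsum_le_of_sum_range_le (fun _ => by positivity) fun k => ?_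
  have hIoc : ∑ j ∈ Finset.range k, (((n + 1 + j : ℕ) : ℝ) ^ 2)⁻¹
      = ∑ i ∈ Finset.Ioc n (n + k), ((i : ℝ) ^ 2)⁻¹ := by
    rw [← Finset.Icc_add_one_left_eq_Ioc, ← Finset.Ico_add_one_right_eq_Icc,
      Finset.sum_Ico_eq_sum_range]
    simp
  rw [hIoc]
  refine (sum_Ioc_inv_sq_le_sub hn (Nat.le_add_right n k)).trans ?_
  exact sub_le_self _ (by positivity)

/-- The series `Σ_{j≥1} p_j` converges with value `c₀'`, and the tails satisfy
`|Σ_{j=n+1}^∞ p_j| ≤ C/n` for a constant `C > 0`. -/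
theorem binet_sum_and_tail :
    HasSum (fun j : ℕ => binetP (j + 1)) binetC ∧
    ∃ C : ℝ, 0 < C ∧ ∀ n : ℕ, 1 ≤ n → |∑' j : ℕ, binetP (n + 1 + j)| ≤ C / n := by
  set F : ℕ → ℝ → ℝ := fun j ζ => binetFn ζ * exp (-((((j + 1 : ℕ) : ℝ) / 2) * ζ))
  have hsq : Summable fun m : ℕ => 4 * ((m : ℝ) ^ 2)⁻¹ :=
    (Real.summable_nat_pow_inv.mpr one_lt_two).mul_left 4
  refine ⟨?_, 4, four_pos, fun n hn => ?_⟩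
  · have hinterchange := hasSum_integral_of_summable_integral_norm
      (F := F) (μ := volume.restrict (Ioi 0))
      (fun j => integrableOn_binetFn_mul_exp_neg_mul (by positivity))
      (((summable_nat_add_iff 1).mpr hsq).of_nonneg_of_le
        (fun _ => integral_nonneg fun _ => norm_nonneg _)
        fun j => integral_norm_binetFn_mul_exp_neg_half_mul_le j.succ_ne_zero)
    have hC : binetC = ∫ ζ in Ioi 0, ∑' j, F j ζ :=
      setIntegral_congr_fun measurableSet_Ioi fun ζ hζ =>
        ((hasSum_exp_neg_half_mul_succ hζ).mul_left (binetFn ζ)).tsum_eq.symm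
    simpa only [binetP_eq_integral, hC] using hinterchange
  · have hmajor : Summable fun j : ℕ => 4 * (((n + 1 + j : ℕ) : ℝ) ^ 2)⁻¹ :=
      hsq.comp_injective (add_right_injective (n + 1))
    calc |∑' j, binetP (n + 1 + j)| ≤ ∑' j : ℕ, 4 * (((n + 1 + j : ℕ) : ℝ) ^ 2)⁻¹ :=
          tsum_of_norm_bounded (f := fun j => binetP (n + 1 + j)) hmajor.hasSum
            fun j => abs_binetP_le (by omega)
      _ = 4 * ∑' j : ℕ, (((n + 1 + j : ℕ) : ℝ) ^ 2)⁻¹ := tsum_mul_left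
      _ ≤ 4 * (n : ℝ)⁻¹ := by gcongr; exact tsum_inv_sq_nat_add_le (by omega)
      _ = 4 / n := (div_eq_mul_inv _ _).symm
end
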